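/- arXiv:2204.04685 — 4 statements merged into one kernel-verified Lean document; each statement's English description precedes it below -/
import Mathlib

section
/- Let ε ∈ (0, 1/10] with 1/ε ∈ ℤ. Let I be a finite set of items with sizes S : T → ℝ≥0, and let I' be the instance obtained from I as follows: every item x of size X > 1/ε² is replaced by ⌊ε²X⌋ items of size 1/ε² and one additional item of size X − ⌊ε²X⌋·(1/ε²); afterwards, every item whose size is at least ε has its size rounded up to the next integer multiple of ε². If there exists a fractional packing of I into a finite set of bins B satisfying cardinality constraint k with every bin load at most 1, then there exists a fractional packing of I' into B satisfying cardinality constraint k with every bin load at most 1 + 3ε. -/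
/-- Number of pieces an item of size `X` is split into: an item of size `X > 1/ε²`
is replaced by `⌊ε²X⌋` items of size `1/ε²` plus one item for the remainder;
other items are kept as a single piece. -/
noncomputable def numPieces (ε X : ℝ) : ℕ :=
  if 1 / ε ^ 2 < X then (⌊ε ^ 2 * X⌋).toNat + 1 else 1

/-- The size of the `i`-th piece of an item of size `X`. -/
noncomputable def pieceSize (ε X : ℝ) (i : ℕ) : ℝ :=
  if 1 / ε ^ 2 < X then
    (if i < (⌊ε ^ 2 * X⌋).toNat then 1 / ε ^ 2
     else X - ((⌊ε ^ 2 * X⌋).toNat : ℝ) * (1 / ε ^ 2))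
  else X

/-- Sizes at least `ε` are rounded up to the next integer multiple of `ε²`. -/
noncomputable def roundSize (ε X : ℝ) : ℝ :=
  if ε ≤ X then ε ^ 2 * ⌈X / ε ^ 2⌉ else X

section RoundingForwardAux

lemma initseg (M : ℕ) (q : ℕ → Prop) [DecidablePred q]
    (hq : ∀ ⦃j' j⦄, j' ≤ j → q j → q j') :
    (Finset.range M).filter q = Finset.range (((Finset.range M).filter q).card) := by
  ext j
  simp only [Finset.mem_filter, Finset.mem_range]
  constructor
  · rintro ⟨hjM, hqj⟩
    have hsub : Finset.range (j + 1) ⊆ (Finset.range M).filter q := by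
      intro j' hj'
      have hle : j' ≤ j := Nat.lt_succ_iff.mp (Finset.mem_range.mp hj')
      exact Finset.mem_filter.mpr ⟨Finset.mem_range.mpr (lt_of_le_of_lt hle hjM), hq hle hqj⟩
    have := Finset.card_le_card hsub
    simp only [Finset.card_range] at this
    omega
  · intro hj
    by_contra hcon
    have hsub : (Finset.range M).filter q ⊆ Finset.range j := by
      intro j'' hj''
      simp only [Finset.mem_filter, Finset.mem_range] at hj''
      simp only [Finset.mem_range]
      by_contra hge
      push_neg at hge
      exact hcon ⟨lt_of_le_of_lt hge hj''.1, hq hge hj''.2⟩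
    have := Finset.card_le_card hsub
    simp only [Finset.card_range] at this
    omega

lemma sum_single_bound {n : ℕ} (f : Fin n → ℝ) (c : ℝ) (hc : 0 ≤ c)
    (hf : ∀ i, 0 ≤ f i) (huniq : ∀ i j, 0 < f i → 0 < f j → i = j)
    (hfc : ∀ i, f i ≤ c) : ∑ i, f i ≤ c := by
  by_cases hex : ∃ i, 0 < f i
  · obtain ⟨i0, hi0⟩ := hex
    have hsum : ∑ i, f i = f i0 := by
      refine Finset.sum_eq_single i0 (fun j _ hj => ?_) (fun hni => absurd (Finset.mem_univ i0) hni)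
      rcases (hf j).lt_or_eq with hlt | heq
      · exact absurd (huniq j i0 hlt hi0) hj
      · exact heq.symm
    rw [hsum]; exact hfc i0
  · push_neg at hex
    have : ∀ i ∈ Finset.univ, f i = (0 : ℝ) := fun i _ => le_antisymm (hex i) (hf i)
    rw [Finset.sum_eq_zero this]; exact hc

lemma split_fin (M N : ℕ) (Δ : ℝ) (hΔ : 0 < Δ) (v : Fin M → ℝ)
    (hv : ∀ b, 0 ≤ v b) (hvΔ : ∀ b, v b ≤ Δ) (s : Fin N → ℝ) (hs : ∀ i, 0 ≤ s i)
    (htot : ∑ i, s i + N * Δ ≤ ∑ b, v b) :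
    ∃ z : Fin N → Fin M → ℝ,
      (∀ i b, 0 ≤ z i b) ∧ (∀ i, ∑ b, z i b = s i) ∧
      (∀ b i j, 0 < z i b → 0 < z j b → i = j) ∧ (∀ i b, z i b ≤ v b) := by
  classical
  set v' : ℕ → ℝ := fun j => if h : j < M then v ⟨j, h⟩ else 0 with hv'def
  set s' : ℕ → ℝ := fun i => if h : i < N then s ⟨i, h⟩ else 0 with hs'def
  set p : ℕ → ℝ := fun j => ∑ j' ∈ Finset.range j, v' j' with hpdef
  have hv'0 : ∀ j, 0 ≤ v' j := by
    intro j; simp only [hv'def]; split <;> [exact hv _; exact le_refl 0]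
  have hv'Δ : ∀ j, v' j ≤ Δ := by
    intro j; simp only [hv'def]; split <;> [exact hvΔ _; exact hΔ.le]
  have hs'0 : ∀ i, 0 ≤ s' i := by
    intro i; simp only [hs'def]; split <;> [exact hs _; exact le_refl 0]
  have pmono : Monotone p := by
    intro a b hab
    exact Finset.sum_le_sum_of_subset_of_nonneg (Finset.range_subset_range.mpr hab)
      (fun j _ _ => hv'0 j)
  have pM : p M = ∑ b, v b := by
    show ∑ j' ∈ Finset.range M, v' j' = ∑ b, v b
    rw [← Fin.sum_univ_eq_sum_range v' M]
    refine Finset.sum_congr rfl (fun b _ => ?_)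
    simp only [hv'def, dif_pos b.isLt]
  set J : ℝ → ℕ := fun θ => ((Finset.range M).filter (fun j => p j < θ)).card with hJdef
  have hA : ∀ θ, (Finset.range M).filter (fun j => p j < θ) = Finset.range (J θ) := by
    intro θ
    exact initseg M (fun j => p j < θ) (fun j' j hle hq => lt_of_le_of_lt (pmono hle) hq)
  have hJle : ∀ θ, J θ ≤ M := fun θ => le_trans (Finset.card_le_card (Finset.filter_subset _ _))
    (le_of_eq (Finset.card_range M))
  have hJmono : ∀ θ₁ θ₂, θ₁ ≤ θ₂ → J θ₁ ≤ J θ₂ := by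
    intro θ₁ θ₂ hθ
    refine Finset.card_le_card ?_
    intro j hj
    simp only [Finset.mem_filter] at hj ⊢
    exact ⟨hj.1, lt_of_lt_of_le hj.2 hθ⟩
  have K2 : ∀ θ, 0 ≤ θ → p (J θ) ≤ θ + Δ := by
    intro θ hθ
    rcases Nat.eq_zero_or_pos (J θ) with h0 | hpos
    · rw [h0]
      simp only [hpdef, Finset.range_zero, Finset.sum_empty]
      positivity
    · obtain ⟨J', hJ'⟩ : ∃ J', J θ = J' + 1 := ⟨J θ - 1, by omega⟩
      have hmem : J' ∈ Finset.range (J θ) := by rw [hJ']; simp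
      rw [← hA θ] at hmem
      have hpJ' : p J' < θ := (Finset.mem_filter.mp hmem).2
      have hps : p (J' + 1) = p J' + v' J' := Finset.sum_range_succ v' J'
      rw [hJ', hps]
      have := hv'Δ J'
      linarith
  have K3 : ∀ θ, θ ≤ p M → θ ≤ p (J θ) := by
    intro θ hθ
    rcases lt_or_ge (J θ) M with hlt | hge
    · by_contra hcon
      push_neg at hcon
      have : J θ ∈ (Finset.range M).filter (fun j => p j < θ) :=
        Finset.mem_filter.mpr ⟨Finset.mem_range.mpr hlt, hcon⟩
      rw [hA θ] at this
      exact absurd (Finset.mem_range.mp this) (lt_irrefl _)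
    · have : J θ = M := le_antisymm (hJle θ) hge
      rw [this]; exact hθ
  set c : ℕ → ℝ := fun i => (∑ i' ∈ Finset.range i, s' i') + i * Δ with hcdef
  have hcsucc : ∀ i, c (i + 1) = c i + s' i + Δ := by
    intro i
    simp only [hcdef, Finset.sum_range_succ]
    push_cast
    ring
  have cmono : Monotone c := by
    apply monotone_nat_of_le_succ
    intro i
    rw [hcsucc i]
    have := hs'0 i
    linarith
  have c0 : c 0 = 0 := by simp [hcdef]
  have cnonneg : ∀ i, 0 ≤ c i := fun i => c0 ▸ cmono (Nat.zero_le i)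
  have ccN : c N ≤ p M := by
    rw [pM]
    refine le_trans (le_of_eq ?_) htot
    simp only [hcdef]
    congr 1
    rw [← Fin.sum_univ_eq_sum_range s' N]
    refine Finset.sum_congr rfl (fun i _ => ?_)
    simp only [hs'def, dif_pos i.isLt]
  -- groups
  set bnd : Fin N → ℕ := fun i => if i.1 + 1 < N then J (c (i.1 + 1)) else M with hbnddef
  set G : Fin N → Finset ℕ := fun i => Finset.Ico (J (c i.1)) (bnd i) with hGdef
  have hbndle : ∀ i : Fin N, J (c i.1) ≤ bnd i := by
    intro i
    simp only [hbnddef]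
    split
    · exact hJmono _ _ (cmono (Nat.le_succ _))
    · exact hJle _
  have hbndM : ∀ i : Fin N, bnd i ≤ M := by
    intro i; simp only [hbnddef]; split <;> [exact hJle _; exact le_refl M]
  set mG : Fin N → ℝ := fun i => ∑ j ∈ G i, v' j with hmGdef
  have hmG : ∀ i, mG i = p (bnd i) - p (J (c i.1)) := by
    intro i
    simp only [hmGdef, hGdef]
    rw [Finset.sum_Ico_eq_sub v' (hbndle i)]
  have mass_ge : ∀ i, s i ≤ mG i := by
    intro i
    rw [hmG i]
    have hKc : p (J (c i.1)) ≤ c i.1 + Δ := K2 _ (cnonneg _)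
    have hsi : s' i.1 = s i := by simp only [hs'def, dif_pos i.isLt]
    by_cases hlast : i.1 + 1 < N
    · have hb : bnd i = J (c (i.1 + 1)) := if_pos hlast
      rw [hb]
      have h1 : c (i.1 + 1) ≤ p (J (c (i.1 + 1))) :=
        K3 _ (le_trans (cmono (by omega)) ccN)
      have h2 := hcsucc i.1
      rw [← hsi]
      linarith
    · have hb : bnd i = M := if_neg hlast
      rw [hb]
      have hiN : i.1 + 1 = N := by omega
      have h1 : c N ≤ p M := ccN
      have h2 := hcsucc i.1
      rw [hiN] at h2
      rw [← hsi]
      linarith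
  have mG_nonneg : ∀ i, 0 ≤ mG i := fun i =>
    Finset.sum_nonneg (fun j _ => hv'0 j)
  -- define z
  refine ⟨fun i b => if b.1 ∈ G i then v' b.1 * (s i / mG i) else 0, ?_, ?_, ?_, ?_⟩
  · intro i b
    dsimp only
    split
    · exact mul_nonneg (hv'0 _) (div_nonneg (hs i) (mG_nonneg i))
    · exact le_refl 0
  · intro i
    have hsum : ∑ b : Fin M, (if b.1 ∈ G i then v' b.1 * (s i / mG i) else 0)
        = ∑ j ∈ Finset.range M, (if j ∈ G i then v' j * (s i / mG i) else 0) :=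
      Fin.sum_univ_eq_sum_range (fun j => if j ∈ G i then v' j * (s i / mG i) else 0) M
    rw [hsum]
    have hGsub : G i ⊆ Finset.range M := by
      intro j hj
      simp only [hGdef, Finset.mem_Ico] at hj
      exact Finset.mem_range.mpr (lt_of_lt_of_le hj.2 (hbndM i))
    rw [Finset.sum_ite_mem, Finset.inter_eq_right.mpr hGsub, ← Finset.sum_mul]
    have hGm : (∑ j ∈ G i, v' j) = mG i := rfl
    rw [hGm]
    rcases (mG_nonneg i).lt_or_eq with hpos | heq
    · rw [mul_comm, div_mul_cancel₀ _ hpos.ne']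
    · have h0 : mG i = 0 := heq.symm
      have hsi0 : s i = 0 := le_antisymm (h0 ▸ mass_ge i) (hs i)
      rw [hsi0, h0]
      simp
  · intro b i j hi hj
    have hbi : b.1 ∈ G i := by by_contra hc; simp [hc] at hi
    have hbj : b.1 ∈ G j := by by_contra hc; simp [hc] at hj
    by_contra hne
    have key : ∀ i₁ i₂ : Fin N, i₁.1 < i₂.1 → b.1 ∈ G i₁ → b.1 ∈ G i₂ → False := by
      intro i₁ i₂ hlt h1 h2
      simp only [hGdef, Finset.mem_Ico] at h1 h2
      have hb1 : bnd i₁ = J (c (i₁.1 + 1)) := if_pos (by omega)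
      have : bnd i₁ ≤ J (c i₂.1) := by
        rw [hb1]; exact hJmono _ _ (cmono (by omega))
      omega
    rcases lt_trichotomy i.1 j.1 with hlt | heqv | hgt
    · exact key i j hlt hbi hbj
    · exact hne (Fin.ext heqv)
    · exact key j i hgt hbj hbi
  · intro i b
    dsimp only
    split
    · have hvb : v' b.1 = v b := by simp only [hv'def, dif_pos b.isLt]
      rw [← hvb]
      rcases (mG_nonneg i).lt_or_eq with hpos | heq
      · have : s i / mG i ≤ 1 := (div_le_one hpos).mpr (mass_ge i)
        exact mul_le_of_le_one_right (hv'0 _) this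
      · have h0 : mG i = 0 := heq.symm
        have hsi0 : s i = 0 := le_antisymm (h0 ▸ mass_ge i) (hs i)
        simp [hsi0, hv'0 b.1]
    · exact hv b

lemma roundSize_nonneg {ε X : ℝ} (hX : 0 ≤ X) : 0 ≤ roundSize ε X := by
  unfold roundSize
  split_ifs with h
  · have h2 : (0:ℝ) ≤ X / ε ^ 2 := div_nonneg hX (sq_nonneg ε)
    have := Int.ceil_nonneg h2
    have : (0:ℝ) ≤ (⌈X / ε ^ 2⌉ : ℝ) := by exact_mod_cast this
    positivity
  · exact hX

lemma roundSize_le {ε X : ℝ} (hε : 0 < ε) : roundSize ε X ≤ X + ε ^ 2 := by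
  unfold roundSize
  split_ifs with h
  · have hne : (ε:ℝ) ^ 2 ≠ 0 := by positivity
    have h1 : (⌈X / ε ^ 2⌉ : ℝ) < X / ε ^ 2 + 1 := Int.ceil_lt_add_one _
    have h2 : ε ^ 2 * (⌈X / ε ^ 2⌉ : ℝ) ≤ ε ^ 2 * (X / ε ^ 2 + 1) :=
      mul_le_mul_of_nonneg_left h1.le (sq_nonneg ε)
    have h3 : ε ^ 2 * (X / ε ^ 2 + 1) = X + ε ^ 2 := by field_simp
    linarith
  · nlinarith [sq_nonneg ε]

lemma roundSize_le_mul {ε X : ℝ} (hε : 0 < ε) (hX : 0 ≤ X) :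
    roundSize ε X ≤ (1 + 3 * ε) * X := by
  rcases le_or_gt ε X with h | h
  · have h1 : roundSize ε X ≤ X + ε ^ 2 := roundSize_le hε
    nlinarith
  · have h1 : roundSize ε X = X := if_neg (not_le.mpr h)
    nlinarith

lemma roundSize_inv_sq {ε : ℝ} (hε : 0 < ε) (hε1 : ε ≤ 1) (hεint : ∃ n : ℤ, (1:ℝ) / ε = n) :
    roundSize ε (1 / ε ^ 2) = 1 / ε ^ 2 := by
  obtain ⟨n, hn⟩ := hεint
  have hεne : ε ≠ 0 := hε.ne'
  have hnε : (n : ℝ) * ε = 1 := by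
    field_simp at hn
    linarith [hn]
  have hle : ε ≤ 1 / ε ^ 2 := by
    rw [le_div_iff₀ (by positivity)]
    nlinarith
  unfold roundSize
  rw [if_pos hle]
  have hval : (1 / ε ^ 2) / ε ^ 2 = ((n ^ 4 : ℤ) : ℝ) := by
    push_cast
    have : (n:ℝ) = 1 / ε := hn.symm
    rw [this]
    field_simp
  rw [hval, Int.ceil_intCast]
  push_cast
  have : (n:ℝ) = 1 / ε := hn.symm
  rw [this]
  field_simp

-- facts for big items
lemma big_facts {ε X : ℝ} (hε : 0 < ε) (hbig : 1 / ε ^ 2 < X) :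
    (((⌊ε ^ 2 * X⌋).toNat : ℝ) ≤ ε ^ 2 * X) ∧ (1 ≤ (⌊ε ^ 2 * X⌋).toNat) ∧
      (0 ≤ X - ((⌊ε ^ 2 * X⌋).toNat : ℝ) * (1 / ε ^ 2)) := by
  have hX0 : 0 < X := lt_trans (by positivity) hbig
  have h1 : (1:ℝ) < ε ^ 2 * X := by
    rw [div_lt_iff₀ (by positivity)] at hbig
    nlinarith
  have hfl0 : (0:ℤ) ≤ ⌊ε ^ 2 * X⌋ := Int.floor_nonneg.mpr (by nlinarith)
  have hcast : ((⌊ε ^ 2 * X⌋).toNat : ℝ) = ((⌊ε ^ 2 * X⌋ : ℤ) : ℝ) := by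
    exact_mod_cast congrArg (fun z : ℤ => (z : ℝ)) (Int.toNat_of_nonneg hfl0)
  constructor
  · rw [hcast]; exact Int.floor_le _
  constructor
  · have : (1:ℤ) ≤ ⌊ε ^ 2 * X⌋ := by
      rw [Int.le_floor]; exact_mod_cast h1.le
    omega
  · have hm : ((⌊ε ^ 2 * X⌋).toNat : ℝ) ≤ ε ^ 2 * X := by rw [hcast]; exact Int.floor_le _
    have : ((⌊ε ^ 2 * X⌋).toNat : ℝ) * (1 / ε ^ 2) ≤ (ε ^ 2 * X) * (1 / ε ^ 2) :=
      mul_le_mul_of_nonneg_right hm (by positivity)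
    have heq : (ε ^ 2 * X) * (1 / ε ^ 2) = X := by field_simp
    linarith

lemma pieceSize_nonneg {ε X : ℝ} (hε : 0 < ε) (hX : 0 ≤ X) (i : ℕ) :
    0 ≤ pieceSize ε X i := by
  unfold pieceSize
  split_ifs with h h2
  · positivity
  · exact (big_facts hε h).2.2
  · exact hX

-- sum of rounded piece sizes for a big item
lemma sum_pieces_le {ε X : ℝ} (hε : 0 < ε) (hε1 : ε ≤ 1)
    (hεint : ∃ n : ℤ, (1:ℝ) / ε = n) (hbig : 1 / ε ^ 2 < X) :
    ∑ i : Fin (numPieces ε X), roundSize ε (pieceSize ε X i.1) ≤ X + ε ^ 2 := by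
  set m := (⌊ε ^ 2 * X⌋).toNat with hm
  have hnum : numPieces ε X = m + 1 := if_pos hbig
  obtain ⟨hmle, hm1, hr0⟩ := big_facts hε hbig
  set f : ℕ → ℝ := fun n => roundSize ε (pieceSize ε X n) with hf
  have hsum : ∑ i : Fin (numPieces ε X), roundSize ε (pieceSize ε X i.1)
      = ∑ j ∈ Finset.range (numPieces ε X), f j := Fin.sum_univ_eq_sum_range f _
  rw [hsum, hnum, Finset.sum_range_succ]
  have hfull : ∀ j ∈ Finset.range m, f j = 1 / ε ^ 2 := by
    intro j hj
    have hjm : j < m := Finset.mem_range.mp hj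
    simp only [hf]
    unfold pieceSize
    rw [if_pos hbig, if_pos hjm]
    exact roundSize_inv_sq hε hε1 hεint
  rw [Finset.sum_congr rfl hfull, Finset.sum_const, Finset.card_range, nsmul_eq_mul]
  have hrem : f m = roundSize ε (X - (m : ℝ) * (1 / ε ^ 2)) := by
    simp only [hf]
    unfold pieceSize
    rw [if_pos hbig, if_neg (lt_irrefl m)]
  rw [hrem]
  have h1 : roundSize ε (X - (m : ℝ) * (1 / ε ^ 2)) ≤ X - (m : ℝ) * (1 / ε ^ 2) + ε ^ 2 :=
    roundSize_le hε
  have h2 : (m : ℝ) * (1 / ε ^ 2) + (X - (m : ℝ) * (1 / ε ^ 2) + ε ^ 2) = X + ε ^ 2 := by ring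
  linarith

-- the main arithmetic inequality for big items
lemma big_arith {ε X : ℝ} (hε : 0 < ε) (hε10 : ε ≤ 1 / 10) (hbig : 1 / ε ^ 2 < X) :
    X + ε ^ 2 + ((⌊ε ^ 2 * X⌋).toNat + 1 : ℕ) * (1 + 3 * ε) ≤ (1 + 3 * ε) * X := by
  obtain ⟨hmle, _, _⟩ := big_facts hε hbig
  have hX0 : 0 < X := lt_trans (by positivity) hbig
  have heX : 10 ≤ ε * X := by
    have h1 : (10:ℝ) ≤ 1 / ε := by
      rw [le_div_iff₀ hε]; linarith
    have h2 : 1 / ε ≤ ε * X := by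
      rw [div_le_iff₀ hε]
      calc (1:ℝ) ≤ ε ^ 2 * X := by
            rw [div_lt_iff₀ (by positivity)] at hbig; nlinarith
        _ = ε * X * ε := by ring
    linarith
  push_cast
  have key : ε ^ 2 + (ε ^ 2 * X + 1) * (1 + 3 * ε) ≤ 3 * ε * X := by
    have h1 : ε ^ 2 * X = ε * (ε * X) := by ring
    nlinarith [heX, hε10, hε, mul_nonneg hε.le hX0.le,
      mul_nonneg (mul_nonneg hε.le hε.le) hX0.le,
      mul_le_mul_of_nonneg_right hε10 (le_trans (by norm_num) heX),
      mul_le_mul_of_nonneg_left hε10 (mul_nonneg hε.le (mul_nonneg hε.le hX0.le))]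
  nlinarith [key, hmle, mul_le_mul_of_nonneg_right hmle (by linarith : (0:ℝ) ≤ 1 + 3 * ε)]

end RoundingForwardAux

/-- If the original instance `I` has a fractional packing with cardinality constraint `k`
and bin loads at most `1`, then the rounded instance `I'` (obtained by splitting items of
size greater than `1/ε²` and rounding sizes at least `ε` up to multiples of `ε²`) has a
fractional packing with cardinality constraint `k` and bin loads at most `1 + 3ε`. -/
theorem rounding_forward {T B : Type*} [Fintype T] [Fintype B] (ε : ℝ)
    (hε : 0 < ε) (hε10 : ε ≤ 1 / 10) (hεint : ∃ n : ℤ, (1 : ℝ) / ε = n)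
    (S : T → ℝ) (hS : ∀ t, 0 ≤ S t) (k : ℕ)
    (h : ∃ x : T → B → ℝ,
      (∀ t b, 0 ≤ x t b) ∧
      (∀ t, ∑ b, x t b = S t) ∧
      (∀ b, {t | 0 < x t b}.ncard ≤ k) ∧
      (∀ b, ∑ t, x t b ≤ 1)) :
    ∃ x' : ((t : T) × Fin (numPieces ε (S t))) → B → ℝ,
      (∀ p b, 0 ≤ x' p b) ∧
      (∀ p : (t : T) × Fin (numPieces ε (S t)),
        ∑ b, x' p b = roundSize ε (pieceSize ε (S p.1) p.2.1)) ∧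
      (∀ b, {p : (t : T) × Fin (numPieces ε (S t)) | 0 < x' p b}.ncard ≤ k) ∧
      (∀ b, ∑ p, x' p b ≤ 1 + 3 * ε) := by
  classical
  obtain ⟨x, h1, h2, h3, h4⟩ := h
  have hε1 : ε ≤ 1 := le_trans hε10 (by norm_num)
  have h3ε : (0:ℝ) < 1 + 3 * ε := by linarith
  have hxb : ∀ t b, x t b ≤ 1 := by
    intro t b
    calc x t b ≤ ∑ t', x t' b :=
          Finset.single_le_sum (fun t' _ => h1 t' b) (Finset.mem_univ t)
      _ ≤ 1 := h4 b
  have Hz : ∀ t : T, ∃ z : Fin (numPieces ε (S t)) → B → ℝ,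
      (∀ i b, 0 ≤ z i b) ∧
      (∀ i : Fin (numPieces ε (S t)), ∑ b, z i b = roundSize ε (pieceSize ε (S t) i.1)) ∧
      (∀ (b : B) (i j : Fin (numPieces ε (S t))), 0 < z i b → 0 < z j b → i = j) ∧
      (∀ b, ∑ i, z i b ≤ (1 + 3 * ε) * x t b) := by
    intro t
    by_cases hbig : 1 / ε ^ 2 < S t
    · -- big item : use the splitting lemma
      set X := S t with hX
      set e : B ≃ Fin (Fintype.card B) := Fintype.equivFin B with he
      have hsplit := split_fin (Fintype.card B) (numPieces ε X) (1 + 3 * ε) h3ε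
        (fun j => (1 + 3 * ε) * x t (e.symm j))
        (fun j => mul_nonneg h3ε.le (h1 t _))
        (fun j => by
          show (1 + 3 * ε) * x t (e.symm j) ≤ 1 + 3 * ε
          have := hxb t (e.symm j)
          nlinarith)
        (fun i => roundSize ε (pieceSize ε X i.1))
        (fun i => roundSize_nonneg (pieceSize_nonneg hε (hS t) i.1))
        (by
          have hv : ∑ j, (1 + 3 * ε) * x t (e.symm j) = (1 + 3 * ε) * X := by
            rw [← Finset.mul_sum]
            congr 1
            rw [Equiv.sum_comp e.symm (x t)]
            exact h2 t
          rw [hv]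
          have hsp := sum_pieces_le hε hε1 hεint hbig
          have hnum : numPieces ε X = (⌊ε ^ 2 * X⌋).toNat + 1 := if_pos hbig
          have harith := big_arith hε hε10 hbig
          rw [← hnum] at harith
          linarith)
      obtain ⟨z', hz1, hz2, hz3, hz4⟩ := hsplit
      refine ⟨fun i b => z' i (e b), fun i b => hz1 i (e b), ?_, ?_, ?_⟩
      · intro i
        rw [Equiv.sum_comp e (z' i)]
        exact hz2 i
      · intro b i j hi hj
        exact hz3 (e b) i j hi hj
      · intro b
        refine sum_single_bound _ _ (mul_nonneg h3ε.le (h1 t b)) (fun i => hz1 i (e b))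
          (fun i j hi hj => hz3 (e b) i j hi hj) (fun i => ?_)
        have hle := hz4 i (e b)
        simp only [Equiv.symm_apply_apply] at hle
        exact hle
    · -- small item : scale
      have hnum : numPieces ε (S t) = 1 := if_neg hbig
      have hps : ∀ i : ℕ, pieceSize ε (S t) i = S t := fun i => if_neg hbig
      refine ⟨fun _ b => x t b * (roundSize ε (S t) / S t), ?_, ?_, ?_, ?_⟩
      · intro i b
        exact mul_nonneg (h1 t b) (div_nonneg (roundSize_nonneg (hS t)) (hS t))
      · intro i
        rw [← Finset.sum_mul, h2 t, hps i.1]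
        rcases (hS t).lt_or_eq with hpos | heq
        · rw [mul_comm, div_mul_cancel₀ _ hpos.ne']
        · rw [← heq]
          have : roundSize ε (0:ℝ) = 0 := if_neg (by linarith)
          rw [this]
          simp
      · intro b i j _ _
        have : numPieces ε (S t) = 1 := hnum
        omega
      · intro b
        have hone : ∀ i : Fin (numPieces ε (S t)),
            (fun (_ : Fin (numPieces ε (S t))) (b : B) => x t b * (roundSize ε (S t) / S t)) i b
              = x t b * (roundSize ε (S t) / S t) := fun _ => rfl
        rw [Finset.sum_const, Finset.card_univ, Fintype.card_fin, hnum, one_smul]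
        rcases (hS t).lt_or_eq with hpos | heq
        · have hrs : roundSize ε (S t) ≤ (1 + 3 * ε) * S t := roundSize_le_mul hε (hS t)
          have hc : roundSize ε (S t) / S t ≤ 1 + 3 * ε := by
            rw [div_le_iff₀ hpos]
            linarith [hrs]
          calc x t b * (roundSize ε (S t) / S t) ≤ x t b * (1 + 3 * ε) :=
                mul_le_mul_of_nonneg_left hc (h1 t b)
            _ = (1 + 3 * ε) * x t b := by ring
        · have hx0 : x t b = 0 := by
            have hsum0 : ∑ b', x t b' = 0 := by rw [h2 t, ← heq]
            have := (Finset.sum_eq_zero_iff_of_nonneg (fun b' _ => h1 t b')).mp hsum0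
            exact this b (Finset.mem_univ b)
          rw [hx0]
          simp
  choose z hz1 hz2 hz3 hz4 using Hz
  refine ⟨fun p b => z p.1 p.2 b, fun p b => hz1 p.1 p.2 b, fun p => hz2 p.1 p.2, ?_, ?_⟩
  · intro b
    have hinj : Set.InjOn Sigma.fst {p : (t : T) × Fin (numPieces ε (S t)) | 0 < z p.1 p.2 b} := by
      rintro ⟨t1, i⟩ hp ⟨t2, j⟩ hq heq
      simp only [Set.mem_setOf_eq] at hp hq
      cases heq
      have : i = j := hz3 t1 b i j hp hq
      rw [this]
    have himg : Sigma.fst '' {p : (t : T) × Fin (numPieces ε (S t)) | 0 < z p.1 p.2 b}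
        ⊆ {t | 0 < x t b} := by
      rintro t ⟨⟨t', i⟩, hp, rfl⟩
      simp only [Set.mem_setOf_eq] at hp ⊢
      have hle : z t' i b ≤ ∑ i', z t' i' b :=
        Finset.single_le_sum (fun i' _ => hz1 t' i' b) (Finset.mem_univ i)
      have := hz4 t' b
      nlinarith [hp, hle, this, h3ε]
    calc {p : (t : T) × Fin (numPieces ε (S t)) | 0 < z p.1 p.2 b}.ncard
        = (Sigma.fst '' {p : (t : T) × Fin (numPieces ε (S t)) | 0 < z p.1 p.2 b}).ncard :=
          (Set.ncard_image_of_injOn hinj).symm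
      _ ≤ {t | 0 < x t b}.ncard := Set.ncard_le_ncard himg (Set.toFinite _)
      _ ≤ k := h3 b
  · intro b
    have hsig : ∑ p : (t : T) × Fin (numPieces ε (S t)), z p.1 p.2 b
        = ∑ t, ∑ i, z t i b := by
      rw [← Finset.univ_sigma_univ, Finset.sum_sigma]
    rw [hsig]
    calc ∑ t, ∑ i, z t i b ≤ ∑ t, (1 + 3 * ε) * x t b :=
          Finset.sum_le_sum (fun t _ => hz4 t b)
      _ = (1 + 3 * ε) * ∑ t, x t b := by rw [Finset.mul_sum]
      _ ≤ (1 + 3 * ε) * 1 := mul_le_mul_of_nonneg_left (h4 b) h3ε.le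
      _ = 1 + 3 * ε := by ring
end

section
/- Let ε ∈ (0, 1/10] with 1/ε ∈ ℤ. Let I be a finite set of items with sizes S : T → ℝ≥0, and let I' be the instance obtained from I as follows: every item x of size X > 1/ε² is replaced by ⌊ε²X⌋ items of size 1/ε² and one additional item of size X − ⌊ε²X⌋·(1/ε²); afterwards, every item whose size is at least ε has its size rounded up to the next integer multiple of ε². If there exists a fractional packing of I' into a finite set of bins B satisfying cardinality constraint k with maximum bin load at most s, then there exists a fractional packing of I into B satisfying cardinality constraint k with maximum bin load at most s. -/
lemma le_roundSize (ε X : ℝ) (hε : 0 < ε) : X ≤ roundSize ε X := by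
  unfold roundSize
  split
  · have h2 : (0:ℝ) < ε ^ 2 := by positivity
    calc X = ε ^ 2 * (X / ε ^ 2) := by field_simp
    _ ≤ ε ^ 2 * ⌈X / ε ^ 2⌉ := by
        exact mul_le_mul_of_nonneg_left (Int.le_ceil _) h2.le
  · exact le_refl X

lemma sum_pieceSize (ε X : ℝ) :
    ∑ i : Fin (numPieces ε X), pieceSize ε X i.1 = X := by
  rw [Fin.sum_univ_eq_sum_range (fun i => pieceSize ε X i) (numPieces ε X)]
  unfold numPieces pieceSize
  by_cases hX : 1 / ε ^ 2 < X
  · simp only [hX, if_true]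
    rw [Finset.sum_range_succ]
    have h1 : ∀ i ∈ Finset.range (⌊ε ^ 2 * X⌋).toNat,
        (if i < (⌊ε ^ 2 * X⌋).toNat then 1 / ε ^ 2
         else X - ((⌊ε ^ 2 * X⌋).toNat : ℝ) * (1 / ε ^ 2)) = 1 / ε ^ 2 := by
      intro i hi
      simp_all [Finset.mem_range]
    rw [Finset.sum_congr rfl h1, Finset.sum_const, Finset.card_range]
    simp
  · simp only [hX, if_false]
    simp

/-- If the rounded instance `I'` (obtained from `I` by splitting items of size greater than
`1/ε²` and rounding sizes at least `ε` up to multiples of `ε²`) has a fractional packing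
with cardinality constraint `k` and maximum bin load at most `s`, then the original
instance `I` has a fractional packing with cardinality constraint `k` and maximum
bin load at most `s`. -/
theorem rounding_backward {T B : Type*} [Fintype T] [Fintype B] (ε : ℝ)
    (hε : 0 < ε) (hε10 : ε ≤ 1 / 10) (hεint : ∃ n : ℤ, (1 : ℝ) / ε = n)
    (S : T → ℝ) (hS : ∀ t, 0 ≤ S t) (k : ℕ) (s : ℝ)
    (h : ∃ x' : ((t : T) × Fin (numPieces ε (S t))) → B → ℝ,
      (∀ p b, 0 ≤ x' p b) ∧
      (∀ p : (t : T) × Fin (numPieces ε (S t)),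
        ∑ b, x' p b = roundSize ε (pieceSize ε (S p.1) p.2.1)) ∧
      (∀ b, {p : (t : T) × Fin (numPieces ε (S t)) | 0 < x' p b}.ncard ≤ k) ∧
      (∀ b, ∑ p, x' p b ≤ s)) :
    ∃ x : T → B → ℝ,
      (∀ t b, 0 ≤ x t b) ∧
      (∀ t, ∑ b, x t b = S t) ∧
      (∀ b, {t | 0 < x t b}.ncard ≤ k) ∧
      (∀ b, ∑ t, x t b ≤ s) := by
  obtain ⟨x', hpos, hsum, hcard, hload⟩ := h
  set R : T → ℝ := fun t => ∑ i : Fin (numPieces ε (S t)), roundSize ε (pieceSize ε (S t) i.1)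
    with hRdef
  have hR : ∀ t, S t ≤ R t := by
    intro t
    calc S t = ∑ i : Fin (numPieces ε (S t)), pieceSize ε (S t) i.1 :=
          (sum_pieceSize ε (S t)).symm
    _ ≤ R t := Finset.sum_le_sum (fun i _ => le_roundSize ε _ hε)
  have hR0 : ∀ t, 0 ≤ R t := fun t => (hS t).trans (hR t)
  set c : T → ℝ := fun t => S t / R t with hcdef
  have hc0 : ∀ t, 0 ≤ c t := fun t => div_nonneg (hS t) (hR0 t)
  have hc1 : ∀ t, c t ≤ 1 := by
    intro t
    rcases eq_or_lt_of_le (hR0 t) with h0 | h0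
    · simp [hcdef, ← h0]
    · exact div_le_one_of_le₀ (hR t) (hR0 t)
  refine ⟨fun t b => c t * ∑ i : Fin (numPieces ε (S t)), x' ⟨t, i⟩ b, ?_, ?_, ?_, ?_⟩
  · intro t b
    exact mul_nonneg (hc0 t) (Finset.sum_nonneg fun i _ => hpos _ _)
  · intro t
    rw [← Finset.mul_sum, Finset.sum_comm]
    have : ∑ i : Fin (numPieces ε (S t)), ∑ b, x' ⟨t, i⟩ b = R t := by
      rw [hRdef]
      exact Finset.sum_congr rfl (fun i _ => hsum ⟨t, i⟩)
    rw [this]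
    rcases eq_or_lt_of_le (hR0 t) with h0 | h0
    · have : S t = 0 := le_antisymm (h0 ▸ hR t) (hS t)
      simp [this, hcdef]
    · rw [hcdef]
      field_simp
  · intro b
    have hsub : {t | 0 < c t * ∑ i : Fin (numPieces ε (S t)), x' ⟨t, i⟩ b}
        ⊆ Sigma.fst '' {p : (t : T) × Fin (numPieces ε (S t)) | 0 < x' p b} := by
      intro t ht
      simp only [Set.mem_setOf_eq] at ht
      have hsumpos : 0 < ∑ i : Fin (numPieces ε (S t)), x' ⟨t, i⟩ b := by
        by_contra hle
        push_neg at hle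
        nlinarith [hc0 t]
      obtain ⟨i, _, hi⟩ := Finset.exists_lt_of_sum_lt (f := fun _ => (0:ℝ))
        (g := fun i => x' ⟨t, i⟩ b) (by simpa using hsumpos)
      exact ⟨⟨t, i⟩, hi, rfl⟩
    calc {t | 0 < c t * ∑ i : Fin (numPieces ε (S t)), x' ⟨t, i⟩ b}.ncard
        ≤ (Sigma.fst '' {p : (t : T) × Fin (numPieces ε (S t)) | 0 < x' p b}).ncard :=
          Set.ncard_le_ncard hsub (Set.toFinite _)
      _ ≤ {p : (t : T) × Fin (numPieces ε (S t)) | 0 < x' p b}.ncard :=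
          Set.ncard_image_le (Set.toFinite _)
      _ ≤ k := hcard b
  · intro b
    calc ∑ t, c t * ∑ i : Fin (numPieces ε (S t)), x' ⟨t, i⟩ b
        ≤ ∑ t, ∑ i : Fin (numPieces ε (S t)), x' ⟨t, i⟩ b := by
          refine Finset.sum_le_sum fun t _ => ?_
          exact mul_le_of_le_one_left (Finset.sum_nonneg fun i _ => hpos _ _) (hc1 t)
      _ = ∑ p : (t : T) × Fin (numPieces ε (S t)), x' p b := by
          rw [← Finset.sum_sigma (f := fun p : (t : T) × Fin (numPieces ε (S t)) => x' p b),
            Finset.univ_sigma_univ]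
      _ ≤ s := hload b
end

section
/- Let there be n items and m bins, sizes s_{ij} ∈ ℝ≥0 ∪ {+∞} for item i in bin j, capacities G_j ∈ ℝ≥0, and a real g ≥ 0. Suppose x ∈ ℝ≥0^{n×m} satisfies: ∑_{j=1}^m x_{ij} = 1 for every item i; ∑_{i=1}^n s_{ij} x_{ij} ≤ G_j for every bin j; and x_{ij} = 0 whenever s_{ij} > g. Then there exists an integral assignment x' ∈ {0,1}^{n×m} such that ∑_{j=1}^m x'_{ij} = 1 for every item i; ∑_{i=1}^n s_{ij} x'_{ij} ≤ G_j + g for every bin j; and x'_{ij} = 1 implies x_{ij} > 0. -/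
/-!
For each bin `j`, lay the items out on `[0, ∞)` in order of nonincreasing size `s i j`, item `i`
occupying an interval of length `x i j`, and cut the line into unit slots `[t, t + 1)`. The pieces
of the intervals form a fractional matching of items into (bin, slot) pairs that saturates every
item and puts weight at most `1` on every slot, so Hall's theorem gives an injective assignment of
items to slots using only positive pieces. An item placed in slot `t + 1` of a bin is no larger than
any item meeting slot `t`, which is then full, so its size is at most the fractional load of slot
`t`; an item in slot `0` has size at most `g`. Summing over the slots, the bin receives at most
`g` plus its fractional load.
-/

open scoped ENNReal NNReal
open Finset

noncomputable section

-- the length of `[0, y] ∩ [t, t + 1]`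
def slotFill (t : ℕ) (y : ℝ≥0) : ℝ≥0 := min (y - t) 1

lemma slotFill_mono (t : ℕ) : Monotone (slotFill t) := fun _ _ h =>
  min_le_min_right 1 (tsub_le_tsub_right h t)

@[simp] lemma slotFill_zero (t : ℕ) : slotFill t 0 = 0 := by simp [slotFill]

lemma slotFill_le_one (t : ℕ) (y : ℝ≥0) : slotFill t y ≤ 1 := min_le_right _ _

lemma slotFill_eq_one {t : ℕ} {y : ℝ≥0} (h : t + 1 ≤ y) : slotFill t y = 1 :=
  min_eq_right (le_tsub_of_add_le_left h)

lemma lt_of_slotFill_pos {t : ℕ} {y : ℝ≥0} (h : 0 < slotFill t y) : (t : ℝ≥0) < y :=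
  tsub_pos_iff_lt.1 (lt_min_iff.1 h).1

lemma lt_of_slotFill_lt_one {t : ℕ} {y : ℝ≥0} (h : slotFill t y < 1) : y < t + 1 := by
  by_contra! hy
  exact h.ne (slotFill_eq_one hy)

lemma sum_range_slotFill (N : ℕ) (y : ℝ≥0) : ∑ t ∈ range N, slotFill t y = min y N := by
  induction N with
  | zero => simp
  | succ N ih =>
    rw [sum_range_succ, ih, slotFill]
    rcases le_total y N with hy | hy
    · simp [hy, tsub_eq_zero_of_le hy, hy.trans (le_add_of_nonneg_right zero_le_one)]
    · rw [min_eq_right hy, ← min_add_add_left, add_tsub_cancel_of_le hy, Nat.cast_succ]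

section Layout

variable (a : ℕ → ℝ≥0)

def slotMass (k t : ℕ) : ℝ≥0 :=
  slotFill t (∑ l ∈ range (k + 1), a l) - slotFill t (∑ l ∈ range k, a l)

variable {a}

lemma monotone_sum_range : Monotone fun k => ∑ l ∈ range k, a l := fun _ _ h =>
  sum_le_sum_of_subset (range_subset_range.2 h)

lemma sum_slotMass_of_le {N k : ℕ} (h : ∑ l ∈ range (k + 1), a l ≤ N) :
    ∑ t ∈ range N, slotMass a k t = a k := by
  have h' : ∑ l ∈ range k, a l ≤ N := (monotone_sum_range k.le_succ).trans h
  unfold slotMass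
  rw [sum_tsub_distrib _ fun t _ => slotFill_mono t (monotone_sum_range k.le_succ),
    sum_range_slotFill, sum_range_slotFill, min_eq_left h, min_eq_left h', sum_range_succ,
    add_tsub_cancel_left]

lemma sum_range_slotMass (K t : ℕ) :
    ∑ k ∈ range K, slotMass a k t = slotFill t (∑ l ∈ range K, a l) := by
  unfold slotMass
  exact (sum_range_tsub (f := fun k => slotFill t (∑ l ∈ range k, a l))
    ((slotFill_mono t).comp monotone_sum_range) K).trans (by simp)

lemma pos_of_slotMass_pos {k t : ℕ} (h : 0 < slotMass a k t) : 0 < a k := by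
  by_contra! h0
  simp [slotMass, sum_range_succ, nonpos_iff_eq_zero.1 h0] at h

lemma lt_and_lt_of_slotMass_pos {k t : ℕ} (h : 0 < slotMass a k t) :
    (t : ℝ≥0) < ∑ l ∈ range (k + 1), a l ∧ ∑ l ∈ range k, a l < t + 1 := by
  have hlt := tsub_pos_iff_lt.1 h
  exact ⟨lt_of_slotFill_pos (pos_of_gt hlt),
    lt_of_slotFill_lt_one (hlt.trans_le (slotFill_le_one _ _))⟩

lemma le_of_slotMass_pos_succ {k k' t : ℕ} (h : 0 < slotMass a k (t + 1))
    (h' : 0 < slotMass a k' t) : k' ≤ k := by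
  by_contra! hkk
  have hlo := (lt_and_lt_of_slotMass_pos h').2
  have hhi := (lt_and_lt_of_slotMass_pos h).1
  push_cast at hhi
  exact (hlo.trans hhi).not_ge (monotone_sum_range hkk)

lemma sum_range_slotMass_eq_one {K k t : ℕ} (hk : k < K) (h : 0 < slotMass a k (t + 1)) :
    ∑ k' ∈ range K, slotMass a k' t = 1 := by
  rw [sum_range_slotMass]
  have hlt := (lt_and_lt_of_slotMass_pos h).1
  push_cast at hlt
  exact slotFill_eq_one (hlt.le.trans (monotone_sum_range hk))

end Layout

theorem exists_injective_pos_of_fractional_matching {α β : Type*} [Fintype α] [Fintype β]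
    (w : α → β → ℝ≥0) (hrow : ∀ a, ∑ b, w a b = 1) (hcol : ∀ b, ∑ a, w a b ≤ 1) :
    ∃ f : α → β, Function.Injective f ∧ ∀ a, 0 < w a (f a) := by
  classical
  refine (Fintype.all_card_le_filter_rel_iff_exists_injective (fun a b => 0 < w a b)).1
    fun A => ?_
  set N : Finset β := {b | ∃ a ∈ A, 0 < w a b}
  have hsupp : ∀ a ∈ A, ∑ b ∈ N, w a b = 1 := fun a ha => by
    rw [← hrow a]
    refine sum_subset (subset_univ N) fun b _ hb => ?_
    by_contra hne
    exact hb (mem_filter.2 ⟨mem_univ b, a, ha, pos_iff_ne_zero.2 hne⟩)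
  have : (#A : ℝ≥0) ≤ #N := calc
    (#A : ℝ≥0) = ∑ a ∈ A, ∑ b ∈ N, w a b := by rw [sum_congr rfl hsupp]; simp
    _ = ∑ b ∈ N, ∑ a ∈ A, w a b := sum_comm
    _ ≤ ∑ b ∈ N, ∑ a, w a b := sum_le_sum fun b _ => sum_le_sum_of_subset (subset_univ A)
    _ ≤ ∑ b ∈ N, 1 := sum_le_sum fun b _ => hcol b
    _ = #N := by simp
  exact_mod_cast this

section Bin

variable {n : ℕ} (size : Fin n → ℝ≥0∞) (mass : Fin n → ℝ≥0)

def binOrder : Equiv.Perm (Fin n) := Tuple.sort fun i => OrderDual.toDual (size i)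

-- `Function.extend` lists the masses in sorted order; values past position `n` are never read
def binSlotMass (i : Fin n) (t : ℕ) : ℝ≥0 :=
  slotMass (Function.extend Fin.val (mass ∘ binOrder size) 0) ((binOrder size).symm i) t

def binSlotLoad (t : ℕ) : ℝ≥0∞ := ∑ i, size i * binSlotMass size mass i t

variable {size mass}

lemma antitone_binOrder : Antitone (size ∘ binOrder size) := fun _ _ h =>
  Tuple.monotone_sort (fun i => OrderDual.toDual (size i)) h

lemma extend_binOrder_apply (i : Fin n) :
    Function.extend Fin.val (mass ∘ binOrder size) 0 ((binOrder size).symm i) = mass i := by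
  simp [Fin.val_injective.extend_apply]

lemma sum_range_extend_binOrder :
    ∑ l ∈ range n, Function.extend Fin.val (mass ∘ binOrder size) 0 l = ∑ i, mass i := by
  rw [← Fin.sum_univ_eq_sum_range (fun l => Function.extend Fin.val (mass ∘ binOrder size) 0 l)]
  simp only [Fin.val_injective.extend_apply]
  exact Equiv.sum_comp (binOrder size) mass

lemma sum_binSlotMass_eq_sum_range (t : ℕ) :
    ∑ i, binSlotMass size mass i t =
      ∑ k ∈ range n, slotMass (Function.extend Fin.val (mass ∘ binOrder size) 0) k t := by
  rw [← Fin.sum_univ_eq_sum_range (fun k => slotMass _ k t)]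
  exact Equiv.sum_comp (binOrder size).symm (fun k => slotMass _ (k : ℕ) t)

lemma sum_binSlotMass_items (t : ℕ) :
    ∑ i, binSlotMass size mass i t = slotFill t (∑ i, mass i) := by
  rw [sum_binSlotMass_eq_sum_range, sum_range_slotMass, sum_range_extend_binOrder]

lemma pos_of_binSlotMass_pos {i : Fin n} {t : ℕ} (h : 0 < binSlotMass size mass i t) :
    0 < mass i :=
  extend_binOrder_apply (size := size) (mass := mass) i ▸ pos_of_slotMass_pos h

lemma sum_binSlotMass_slots (hmass : ∀ i, mass i ≤ 1) (i : Fin n) :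
    ∑ t : Fin n, binSlotMass size mass i t = mass i := by
  have htotal : ∑ i, mass i ≤ n := by
    simpa using sum_le_card_nsmul univ mass 1 fun i _ => hmass i
  rw [Fin.sum_univ_eq_sum_range (fun t => binSlotMass size mass i t)]
  unfold binSlotMass
  rw [sum_slotMass_of_le, extend_binOrder_apply]
  calc _ ≤ ∑ l ∈ range n, Function.extend Fin.val (mass ∘ binOrder size) 0 l :=
        monotone_sum_range ((binOrder size).symm i).isLt
    _ ≤ n := sum_range_extend_binOrder.trans_le htotal

lemma size_le_binSlotLoad {i : Fin n} {t : ℕ} (h : 0 < binSlotMass size mass i (t + 1)) :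
    size i ≤ binSlotLoad size mass t := by
  have hfull : ∑ i', binSlotMass size mass i' t = 1 := by
    rw [sum_binSlotMass_eq_sum_range]
    exact sum_range_slotMass_eq_one ((binOrder size).symm i).isLt h
  have hdom : ∀ i', 0 < binSlotMass size mass i' t → size i ≤ size i' := fun i' h' => by
    simpa using antitone_binOrder (size := size) (Fin.le_iff_val_le_val.2
      (le_of_slotMass_pos_succ h h'))
  calc size i = ∑ i', size i * binSlotMass size mass i' t := by
        rw [← mul_sum, ← ENNReal.ofNNReal_finsetSum, hfull, ENNReal.coe_one, mul_one]
    _ ≤ _ := sum_le_sum fun i' _ => by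
        rcases eq_zero_or_pos (binSlotMass size mass i' t) with h0 | hpos
        · simp [h0]
        · gcongr
          exact hdom i' hpos

lemma sum_binSlotLoad (hmass : ∀ i, mass i ≤ 1) :
    ∑ t : Fin n, binSlotLoad size mass t = ∑ i, size i * mass i := by
  simp only [binSlotLoad]
  rw [sum_comm]
  refine sum_congr rfl fun i _ => ?_
  rw [← mul_sum, ← ENNReal.ofNNReal_finsetSum, sum_binSlotMass_slots hmass]

theorem sum_size_le_of_injOn (hmass : ∀ i, mass i ≤ 1) {g : ℝ≥0∞} {A : Finset (Fin n)}
    {slot : Fin n → Fin n} (hinj : Set.InjOn slot A)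
    (hpos : ∀ i ∈ A, 0 < binSlotMass size mass i (slot i)) (hg : ∀ i ∈ A, size i ≤ g) :
    ∑ i ∈ A, size i ≤ g + ∑ i, size i * mass i := by
  set bound : ℕ → ℝ≥0∞ := fun t => if t = 0 then g else binSlotLoad size mass (t - 1)
  have hbound : ∀ i ∈ A, size i ≤ bound (slot i) := fun i hi => by
    cases ht : (slot i : ℕ) with
    | zero => simpa [bound] using hg i hi
    | succ t => simpa [bound] using size_le_binSlotLoad (ht ▸ hpos i hi)
  calc ∑ i ∈ A, size i ≤ ∑ i ∈ A, bound (slot i) := sum_le_sum hbound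
    _ = ∑ u ∈ A.image slot, bound u := (sum_image (f := fun u : Fin n => bound u) hinj).symm
    _ ≤ ∑ u : Fin n, bound u := sum_le_sum_of_subset (subset_univ _)
    _ = ∑ t ∈ range n, bound t := Fin.sum_univ_eq_sum_range bound n
    _ ≤ ∑ t ∈ range (n + 1), bound t := sum_le_sum_of_subset (range_subset_range.2 n.le_succ)
    _ = g + ∑ i, size i * mass i := by
        rw [sum_range_succ', ← sum_binSlotLoad hmass, Fin.sum_univ_eq_sum_range, add_comm]
        simp [bound]

end Bin

end

/-- The rounding theorem of Lenstra, Shmoys and Tardos: a feasible fractional solution of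
`LP(g)` (sizes `s i j ∈ ℝ≥0 ∪ {+∞}`, capacities `G j`, where no item is fractionally
assigned to a bin in which its size exceeds `g`) can be rounded to an integral assignment
violating each bin capacity by at most `g`, and assigning each item only to bins where
its fractional value was positive. -/
theorem lenstra_shmoys_tardos_rounding (n m : ℕ)
    (s : Fin n → Fin m → ℝ≥0∞) (G : Fin m → ℝ≥0) (g : ℝ≥0)
    (x : Fin n → Fin m → ℝ≥0)
    (hsum : ∀ i, ∑ j, x i j = 1)
    (hcap : ∀ j, ∑ i, s i j * (x i j : ℝ≥0∞) ≤ (G j : ℝ≥0∞))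
    (hbig : ∀ i j, (g : ℝ≥0∞) < s i j → x i j = 0) :
    ∃ x' : Fin n → Fin m → ℝ≥0,
      (∀ i j, x' i j = 0 ∨ x' i j = 1) ∧
      (∀ i, ∑ j, x' i j = 1) ∧
      (∀ j, ∑ i, s i j * (x' i j : ℝ≥0∞) ≤ (G j : ℝ≥0∞) + (g : ℝ≥0∞)) ∧
      (∀ i j, x' i j = 1 → 0 < x i j) := by
  classical
  have hx_le_one : ∀ i j, x i j ≤ 1 := fun i j =>
    hsum i ▸ single_le_sum (fun _ _ => zero_le) (mem_univ j)
  obtain ⟨f, hf_inj, hf_pos⟩ := exists_injective_pos_of_fractional_matching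
    (fun i (p : Fin m × Fin n) => binSlotMass (s · p.1) (x · p.1) i p.2)
    (fun i => by
      rw [Fintype.sum_prod_type, ← hsum i]
      exact sum_congr rfl fun j _ => sum_binSlotMass_slots (size := (s · j)) (hx_le_one · j) i)
    (fun p => (sum_binSlotMass_items _).trans_le (slotFill_le_one _ _))
  have hx_pos : ∀ i, 0 < x i (f i).1 := fun i =>
    pos_of_binSlotMass_pos (size := (s · (f i).1)) (mass := (x · (f i).1)) (hf_pos i)
  have hs_le : ∀ i, s i (f i).1 ≤ g := fun i => not_lt.1 fun h => (hx_pos i).ne' (hbig i _ h)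
  refine ⟨fun i j => if (f i).1 = j then 1 else 0, fun i j => (ite_eq_or_eq _ _ _).symm,
    fun i => by simp, fun j => ?_, fun i j h => ?_⟩
  · have hj : ∀ i ∈ ({i | (f i).1 = j} : Finset (Fin n)), (f i).1 = j := fun i hi =>
      (mem_filter.1 hi).2
    have hload := sum_size_le_of_injOn (hx_le_one · j) (slot := fun i => (f i).2)
      (fun i hi i' hi' h => hf_inj (Prod.ext ((hj i hi).trans (hj i' hi').symm) h))
      (fun i hi => hj i hi ▸ hf_pos i) (fun i hi => hj i hi ▸ hs_le i)
    calc _ = ∑ i with (f i).1 = j, s i j := by simp [apply_ite, sum_filter]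
      _ ≤ g + G j := hload.trans (add_le_add le_rfl (hcap j))
      _ = G j + g := add_comm _ _
  · by_cases hj : (f i).1 = j
    · exact hj ▸ hx_pos i
    · simp [hj] at h
end

section
/- Let ε ∈ (0, 1/10] with 1/ε ∈ ℤ. Let T be a finite set of items with sizes S : T → ℝ≥0 such that every item of size at least ε has size an integer multiple of ε² and size at most 1/ε². Suppose there exists a fractional packing of T into a finite set of bins B satisfying cardinality constraint k with maximum bin load at most G. Then there exists a fractional packing of T into B satisfying cardinality constraint k with maximum bin load at most G + ε², in which for every item t of size at least ε and every bin b, the amount x t b of item t placed in bin b is an integer multiple of ε². -/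
open Finset

noncomputable section NicePackingAux

/-- A real number is an integer. -/
def IsIntR (x : ℝ) : Prop := ∃ n : ℤ, x = n

lemma IsIntR.sub {x y : ℝ} (hx : IsIntR x) (hy : IsIntR y) : IsIntR (x - y) := by
  obtain ⟨n, rfl⟩ := hx; obtain ⟨m, rfl⟩ := hy; exact ⟨n - m, by push_cast; ring⟩

lemma IsIntR.intCast (n : ℤ) : IsIntR (n : ℝ) := ⟨n, rfl⟩

lemma IsIntR.natCast (n : ℕ) : IsIntR (n : ℝ) := ⟨n, by push_cast; ring⟩

lemma IsIntR.sum {ι : Type*} (s : Finset ι) (f : ι → ℝ) (h : ∀ i ∈ s, IsIntR (f i)) :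
    IsIntR (∑ i ∈ s, f i) := by
  classical
  induction s using Finset.induction_on with
  | empty => exact ⟨0, by simp⟩
  | @insert a s ha ih =>
    rw [Finset.sum_insert ha]
    obtain ⟨n, hn⟩ := h a (Finset.mem_insert_self a s)
    obtain ⟨m, hm⟩ := ih fun i hi => h i (Finset.mem_insert_of_mem hi)
    exact ⟨n + m, by rw [hn, hm]; push_cast; ring⟩

lemma IsIntR.toNat {x : ℝ} (hx : IsIntR x) (h0 : 0 ≤ x) : ∃ n : ℕ, x = n := by
  obtain ⟨n, rfl⟩ := hx
  lift n to ℕ using (by exact_mod_cast h0)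
  exact ⟨n, by push_cast; ring⟩

lemma not_isIntR_pos {x : ℝ} (h0 : 0 ≤ x) (hx : ¬ IsIntR x) :
    (⌊x⌋₊ : ℝ) < x ∧ x < ⌊x⌋₊ + 1 ∧ 0 < x := by
  have h1 : (⌊x⌋₊ : ℝ) ≤ x := Nat.floor_le h0
  have h2 : x < ⌊x⌋₊ + 1 := Nat.lt_floor_add_one x
  have h3 : (⌊x⌋₊ : ℝ) ≠ x := fun h => hx ⟨⌊x⌋₊, h.symm⟩
  have h4 : (⌊x⌋₊ : ℝ) < x := lt_of_le_of_ne h1 h3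
  refine ⟨h4, h2, ?_⟩
  rcases Nat.eq_zero_or_pos ⌊x⌋₊ with h | h
  · rcases eq_or_lt_of_le h0 with h' | h'
    · exact absurd ⟨0, h'.symm ▸ by norm_num⟩ hx
    · exact h'
  · calc (0:ℝ) < ⌊x⌋₊ := by exact_mod_cast h
      _ < x := h4

section Sigma

variable {T B : Type*} [Fintype T] [Fintype B]

/-- From cycle data, build a circulation `σ`. -/
lemma sigma_of_cycle (Frac : T → B → Prop) (r : ℕ) (hr : 2 ≤ r)
    (u : ℕ → T) (c : ℕ → B)
    (hu : ∀ i < r, ∀ j < r, u i = u j → i = j)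
    (hc : ∀ i < r, ∀ j < r, c i = c j → i = j)
    (h1 : ∀ i < r, Frac (u i) (c i))
    (h2 : ∀ i < r, Frac (u ((i + 1) % r)) (c i)) :
    ∃ σ : T → B → ℝ,
      (∀ t b, σ t b = 0 ∨ σ t b = 1 ∨ σ t b = -1) ∧
      (∀ t, ∑ b, σ t b = 0) ∧ (∀ b, ∑ t, σ t b = 0) ∧
      (∀ t b, σ t b ≠ 0 → Frac t b) ∧ (∃ t b, σ t b ≠ 0) := by
  classical
  have hr0 : 0 < r := by omega
  set A : T → B → Finset ℕ := fun t b =>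
    (Finset.range r).filter (fun i => t = u i ∧ b = c i) with hA
  set Bf : T → B → Finset ℕ := fun t b =>
    (Finset.range r).filter (fun i => t = u ((i + 1) % r) ∧ b = c i) with hBf
  have hAcard : ∀ t b, (A t b).card ≤ 1 := by
    intro t b
    refine Finset.card_le_one.2 ?_
    intro i hi j hj
    simp only [hA, Finset.mem_filter, Finset.mem_range] at hi hj
    exact hc i hi.1 j hj.1 (hi.2.2.symm.trans hj.2.2)
  have hBcard : ∀ t b, (Bf t b).card ≤ 1 := by
    intro t b
    refine Finset.card_le_one.2 ?_
    intro i hi j hj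
    simp only [hBf, Finset.mem_filter, Finset.mem_range] at hi hj
    exact hc i hi.1 j hj.1 (hi.2.2.symm.trans hj.2.2)
  refine ⟨fun t b => ((A t b).card : ℝ) - (Bf t b).card, ?_, ?_, ?_, ?_, ?_⟩
  · intro t b
    rcases Nat.le_one_iff_eq_zero_or_eq_one.1 (hAcard t b) with h | h <;>
      rcases Nat.le_one_iff_eq_zero_or_eq_one.1 (hBcard t b) with h' | h' <;>
        simp only [h, h'] <;> norm_num
  · intro t
    have key : ∀ b, ((A t b).card : ℝ) - (Bf t b).card =
        ∑ i ∈ Finset.range r, ((if t = u i ∧ b = c i then (1:ℝ) else 0)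
          - (if t = u ((i + 1) % r) ∧ b = c i then 1 else 0)) := by
      intro b
      rw [Finset.sum_sub_distrib, Finset.sum_boole, Finset.sum_boole]
    simp only [key]
    rw [Finset.sum_comm]
    have inner : ∀ i ∈ Finset.range r,
        (∑ b, ((if t = u i ∧ b = c i then (1:ℝ) else 0)
          - (if t = u ((i + 1) % r) ∧ b = c i then 1 else 0))) =
        (if t = u i then (1:ℝ) else 0) - (if t = u ((i + 1) % r) then 1 else 0) := by
      intro i _
      rw [Finset.sum_sub_distrib]
      congr 1
      · rw [show (fun b => if t = u i ∧ b = c i then (1:ℝ) else 0)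
            = fun b => if b = c i then (if t = u i then (1:ℝ) else 0) else 0 by
          funext b; by_cases h1 : t = u i <;> by_cases h2 : b = c i <;> simp [h1, h2]]
        rw [Finset.sum_ite_eq' Finset.univ (c i)]
        simp
      · rw [show (fun b => if t = u ((i+1) % r) ∧ b = c i then (1:ℝ) else 0)
            = fun b => if b = c i then (if t = u ((i+1) % r) then (1:ℝ) else 0) else 0 by
          funext b; by_cases h1 : t = u ((i+1) % r) <;> by_cases h2 : b = c i <;> simp [h1, h2]]
        rw [Finset.sum_ite_eq' Finset.univ (c i)]
        simp
    rw [Finset.sum_congr rfl inner, Finset.sum_sub_distrib]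
    have rot : ∑ i ∈ Finset.range r, (if t = u ((i + 1) % r) then (1:ℝ) else 0)
        = ∑ i ∈ Finset.range r, (if t = u i then (1:ℝ) else 0) := by
      refine Finset.sum_nbij' (fun i => (i + 1) % r) (fun j => (j + (r - 1)) % r)
        ?_ ?_ ?_ ?_ ?_
      · intro a ha; exact Finset.mem_range.2 (Nat.mod_lt _ hr0)
      · intro a ha; exact Finset.mem_range.2 (Nat.mod_lt _ hr0)
      · intro a ha
        show ((a + 1) % r + (r - 1)) % r = a
        rw [Nat.mod_add_mod]
        have e : a + 1 + (r - 1) = a + r := by omega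
        rw [e, Nat.add_mod_right, Nat.mod_eq_of_lt (Finset.mem_range.1 ha)]
      · intro a ha
        show ((a + (r - 1)) % r + 1) % r = a
        rw [Nat.mod_add_mod]
        have e : a + (r - 1) + 1 = a + r := by omega
        rw [e, Nat.add_mod_right, Nat.mod_eq_of_lt (Finset.mem_range.1 ha)]
      · intro a ha; rfl
    rw [rot, sub_self]
  · intro b
    have key : ∀ t, ((A t b).card : ℝ) - (Bf t b).card =
        ∑ i ∈ Finset.range r, ((if t = u i ∧ b = c i then (1:ℝ) else 0)
          - (if t = u ((i + 1) % r) ∧ b = c i then 1 else 0)) := by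
      intro t
      rw [Finset.sum_sub_distrib, Finset.sum_boole, Finset.sum_boole]
    simp only [key]
    rw [Finset.sum_comm]
    refine Finset.sum_eq_zero ?_
    intro i _
    rw [Finset.sum_sub_distrib]
    have e1 : (∑ t, if t = u i ∧ b = c i then (1:ℝ) else 0)
        = if b = c i then (1:ℝ) else 0 := by
      rw [show (fun t => if t = u i ∧ b = c i then (1:ℝ) else 0)
          = fun t => if t = u i then (if b = c i then (1:ℝ) else 0) else 0 by
        funext t; by_cases h1 : t = u i <;> by_cases h2 : b = c i <;> simp [h1, h2]]
      rw [Finset.sum_ite_eq' Finset.univ (u i)]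
      simp
    have e2 : (∑ t, if t = u ((i+1) % r) ∧ b = c i then (1:ℝ) else 0)
        = if b = c i then (1:ℝ) else 0 := by
      rw [show (fun t => if t = u ((i+1) % r) ∧ b = c i then (1:ℝ) else 0)
          = fun t => if t = u ((i+1) % r) then (if b = c i then (1:ℝ) else 0) else 0 by
        funext t; by_cases h1 : t = u ((i+1) % r) <;> by_cases h2 : b = c i <;> simp [h1, h2]]
      rw [Finset.sum_ite_eq' Finset.univ (u ((i+1) % r))]
      simp
    rw [e1, e2, sub_self]
  · intro t b hne
    by_cases hA0 : (A t b).Nonempty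
    · obtain ⟨i, hi⟩ := hA0
      simp only [hA, Finset.mem_filter, Finset.mem_range] at hi
      rw [hi.2.1, hi.2.2]
      exact h1 i hi.1
    · by_cases hB0 : (Bf t b).Nonempty
      · obtain ⟨i, hi⟩ := hB0
        simp only [hBf, Finset.mem_filter, Finset.mem_range] at hi
        rw [hi.2.1, hi.2.2]
        exact h2 i hi.1
      · exfalso
        rw [Finset.not_nonempty_iff_eq_empty] at hA0 hB0
        simp [hA0, hB0] at hne
  · refine ⟨u 0, c 0, ?_⟩
    have hA1 : (A (u 0) (c 0)).card = 1 := by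
      have h01 : 0 ∈ A (u 0) (c 0) :=
        Finset.mem_filter.2 ⟨Finset.mem_range.2 hr0, rfl, rfl⟩
      have ha := hAcard (u 0) (c 0)
      have hb : 1 ≤ (A (u 0) (c 0)).card := Finset.card_pos.2 ⟨0, h01⟩
      omega
    have hB1 : (Bf (u 0) (c 0)).card = 0 := by
      rw [Finset.card_eq_zero, Finset.eq_empty_iff_forall_notMem]
      intro i hi
      simp only [hBf, Finset.mem_filter, Finset.mem_range] at hi
      have hi0 : i = 0 := hc i hi.1 0 hr0 hi.2.2.symm
      subst hi0
      rw [Nat.mod_eq_of_lt hr] at hi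
      exact absurd (hu 1 hr 0 hr0 hi.2.1.symm) (by omega)
    simp only [hA1, hB1]
    norm_num

/-- In a bipartite "fractional" relation where every occupied row and column has at
least two entries, there is a circulation supported on the relation. -/
lemma exists_sigma (Frac : T → B → Prop) (t0 : T) (b0 : B) (h0 : Frac t0 b0)
    (hrow : ∀ t b, Frac t b → ∃ b', b' ≠ b ∧ Frac t b')
    (hcol : ∀ t b, Frac t b → ∃ t', t' ≠ t ∧ Frac t' b) :
    ∃ σ : T → B → ℝ,
      (∀ t b, σ t b = 0 ∨ σ t b = 1 ∨ σ t b = -1) ∧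
      (∀ t, ∑ b, σ t b = 0) ∧ (∀ b, ∑ t, σ t b = 0) ∧
      (∀ t b, σ t b ≠ 0 → Frac t b) ∧ (∃ t b, σ t b ≠ 0) := by
  classical
  have hstep : ∀ p : T × B, Frac p.1 p.2 →
      ∃ q : T × B, Frac q.1 q.2 ∧ q.1 ≠ p.1 ∧ Frac q.1 p.2 ∧ q.2 ≠ p.2 := by
    rintro ⟨t, b⟩ h
    obtain ⟨t', ht', hft'⟩ := hcol t b h
    obtain ⟨b', hb', hfb'⟩ := hrow t' b hft'
    exact ⟨(t', b'), hfb', ht', hft', hb'⟩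
  obtain ⟨g, hg⟩ : ∃ g : T × B → T × B, ∀ p, Frac p.1 p.2 →
      Frac (g p).1 (g p).2 ∧ (g p).1 ≠ p.1 ∧ Frac (g p).1 p.2 ∧ (g p).2 ≠ p.2 :=
    ⟨fun p => if h : Frac p.1 p.2 then (hstep p h).choose else p, by
      intro p h
      simp only [dif_pos h]
      exact (hstep p h).choose_spec⟩
  obtain ⟨w, hw0, hwsucc⟩ : ∃ w : ℕ → T × B, w 0 = (t0, b0) ∧ ∀ n, w (n+1) = g (w n) :=
    ⟨fun n => g^[n] (t0, b0), rfl, fun n => Function.iterate_succ_apply' g n (t0, b0)⟩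
  have hwfrac : ∀ n, Frac (w n).1 (w n).2 := by
    intro n
    induction n with
    | zero => rw [hw0]; exact h0
    | succ n ih => rw [hwsucc n]; exact (hg (w n) ih).1
  have hwstep : ∀ n, Frac (w (n+1)).1 (w n).2 ∧ (w (n+1)).1 ≠ (w n).1 ∧
      (w (n+1)).2 ≠ (w n).2 := by
    intro n
    have ih := hwfrac n
    rw [hwsucc n]
    obtain ⟨_, h2, h3, h4⟩ := hg (w n) ih
    exact ⟨h3, h2, h4⟩
  obtain ⟨v, hve, hvo⟩ : ∃ v : ℕ → T ⊕ B, (∀ a, v (2*a) = Sum.inl (w a).1) ∧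
      (∀ a, v (2*a+1) = Sum.inr (w a).2) := by
    refine ⟨fun j => if j % 2 = 0 then Sum.inl (w (j/2)).1 else Sum.inr (w (j/2)).2, ?_, ?_⟩
    · intro a
      have h1 : (2*a) % 2 = 0 := by omega
      have h2 : (2*a) / 2 = a := by omega
      simp only [h1, h2, if_pos]
    · intro a
      have h1 : ¬ ((2*a+1) % 2 = 0) := by omega
      have h2 : (2*a+1) / 2 = a := by omega
      simp only [h1, h2, if_false]
  have hex : ∃ l, ∃ k, k < l ∧ v k = v l := by
    obtain ⟨x, y, hxy, hv⟩ := Finite.exists_ne_map_eq_of_infinite v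
    rcases lt_or_gt_of_ne hxy with h | h
    · exact ⟨y, x, h, hv⟩
    · exact ⟨x, y, h, hv.symm⟩
  set L := Nat.find hex with hL
  obtain ⟨K, hKL, hvKL⟩ : ∃ k, k < L ∧ v k = v L := Nat.find_spec hex
  have vne : ∀ p q, p < q → q < L → v p ≠ v q := by
    intro p q h1 h2 h3
    exact Nat.find_min hex h2 ⟨p, h1, h3⟩
  rcases Nat.even_or_odd K with hK | hK <;> rcases Nat.even_or_odd L with hL2 | hL2
  · -- both even: item repeat
    obtain ⟨n, hn⟩ := hK
    obtain ⟨m, hm⟩ := hL2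
    have hKn : K = 2*n := by omega
    have hLm : L = 2*m := by omega
    have hw1 : (w n).1 = (w m).1 := by
      have h' := hvKL
      rw [hKn, hLm, hve n, hve m] at h'
      exact Sum.inl.inj h'
    have hnm : n < m := by omega
    have hnm2 : n + 2 ≤ m := by
      by_contra hcon
      have he : m = n + 1 := by omega
      exact (hwstep n).2.1 (by rw [← he, ← hw1])
    have hu : ∀ i < m - n, ∀ j < m - n, (w (n+i)).1 = (w (n+j)).1 → i = j := by
      intro i hi j hj hij
      rcases lt_trichotomy i j with h | h | h
      · exact absurd ((hve (n+i)).trans (congrArg Sum.inl hij)) 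
          (by rw [← hve (n+j)] at *; exact vne (2*(n+i)) (2*(n+j)) (by omega) (by omega))
      · exact h
      · exact absurd ((hve (n+j)).trans (congrArg Sum.inl hij.symm))
          (by rw [← hve (n+i)] at *; exact vne (2*(n+j)) (2*(n+i)) (by omega) (by omega))
    have hc : ∀ i < m - n, ∀ j < m - n, (w (n+i)).2 = (w (n+j)).2 → i = j := by
      intro i hi j hj hij
      rcases lt_trichotomy i j with h | h | h
      · exact absurd ((hvo (n+i)).trans (congrArg Sum.inr hij))
          (by rw [← hvo (n+j)] at *; exact vne (2*(n+i)+1) (2*(n+j)+1) (by omega) (by omega))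
      · exact h
      · exact absurd ((hvo (n+j)).trans (congrArg Sum.inr hij.symm))
          (by rw [← hvo (n+i)] at *; exact vne (2*(n+j)+1) (2*(n+i)+1) (by omega) (by omega))
    have hh1 : ∀ i < m - n, Frac (w (n+i)).1 (w (n+i)).2 := fun i _ => hwfrac (n+i)
    have hh2 : ∀ i < m - n, Frac (w (n+((i+1) % (m-n)))).1 (w (n+i)).2 := by
      intro i hi
      by_cases h : i + 1 < m - n
      · rw [Nat.mod_eq_of_lt h]
        exact (hwstep (n+i)).1
      · have hieq : i + 1 = m - n := by omega
        rw [hieq, Nat.mod_self]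
        show Frac (w (n+0)).1 (w (n+i)).2
        have hni : n + i = m - 1 := by omega
        have hn0 : n + 0 = n := rfl
        rw [hn0, hni, hw1]
        have hs := (hwstep (m-1)).1
        have hm1 : m - 1 + 1 = m := by omega
        rw [hm1] at hs
        exact hs
    exact sigma_of_cycle Frac (m-n) (by omega) (fun i => (w (n+i)).1)
      (fun i => (w (n+i)).2) hu hc hh1 hh2
  · -- K even, L odd: impossible
    exfalso
    obtain ⟨a, ha⟩ := hK
    obtain ⟨b2, hb⟩ := hL2
    have h1 : K = 2*a := by omega
    have h2 : L = 2*b2+1 := by omega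
    rw [h1, h2, hve a, hvo b2] at hvKL
    exact Sum.inl_ne_inr hvKL
  · -- K odd, L even: impossible
    exfalso
    obtain ⟨a, ha⟩ := hK
    obtain ⟨b2, hb⟩ := hL2
    have h1 : K = 2*a+1 := by omega
    have h2 : L = 2*b2 := by omega
    rw [h1, h2, hvo a, hve b2] at hvKL
    exact Sum.inr_ne_inl hvKL
  · -- both odd: bin repeat
    obtain ⟨n, hn⟩ := hK
    obtain ⟨m, hm⟩ := hL2
    have hKn : K = 2*n+1 := by omega
    have hLm : L = 2*m+1 := by omega
    have hw2 : (w n).2 = (w m).2 := by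
      have h' := hvKL
      rw [hKn, hLm, hvo n, hvo m] at h'
      exact Sum.inr.inj h'
    have hnm : n < m := by omega
    have hnm2 : n + 2 ≤ m := by
      by_contra hcon
      have he : m = n + 1 := by omega
      exact (hwstep n).2.2 (by rw [← he, ← hw2])
    have hu : ∀ i < m - n, ∀ j < m - n, (w (n+1+i)).1 = (w (n+1+j)).1 → i = j := by
      intro i hi j hj hij
      rcases lt_trichotomy i j with h | h | h
      · exact absurd ((hve (n+1+i)).trans (congrArg Sum.inl hij))
          (by rw [← hve (n+1+j)] at *
              exact vne (2*(n+1+i)) (2*(n+1+j)) (by omega) (by omega))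
      · exact h
      · exact absurd ((hve (n+1+j)).trans (congrArg Sum.inl hij.symm))
          (by rw [← hve (n+1+i)] at *
              exact vne (2*(n+1+j)) (2*(n+1+i)) (by omega) (by omega))
    have hcpos : ∀ i < m - n, ∃ p, p < L ∧ v p = Sum.inr (w (n+1+i)).2 ∧
        p = (if i = m - n - 1 then 2*n+1 else 2*(n+1+i)+1) := by
      intro i hi
      by_cases h : i = m - n - 1
      · refine ⟨2*n+1, by omega, ?_, by rw [if_pos h]⟩
        have : n + 1 + i = m := by omega
        rw [this, ← hw2]
        exact hvo n
      · exact ⟨2*(n+1+i)+1, by omega, hvo (n+1+i), by rw [if_neg h]⟩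
    have hc : ∀ i < m - n, ∀ j < m - n, (w (n+1+i)).2 = (w (n+1+j)).2 → i = j := by
      intro i hi j hj hij
      obtain ⟨p, hpL, hvp, hpe⟩ := hcpos i hi
      obtain ⟨q, hqL, hvq, hqe⟩ := hcpos j hj
      by_contra hne
      have hpq : p ≠ q := by
        by_cases h1 : i = m - n - 1 <;> by_cases h2 : j = m - n - 1 <;>
          simp only [h1, h2, if_pos, if_neg, if_true, if_false] at hpe hqe <;> omega
      have hvpq : v p = v q := by rw [hvp, hvq, hij]
      rcases lt_or_gt_of_ne hpq with h | h
      · exact vne p q h hqL hvpq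
      · exact vne q p h hpL hvpq.symm
    have hh1 : ∀ i < m - n, Frac (w (n+1+i)).1 (w (n+1+i)).2 := fun i _ => hwfrac (n+1+i)
    have hh2 : ∀ i < m - n, Frac (w (n+1+((i+1) % (m-n)))).1 (w (n+1+i)).2 := by
      intro i hi
      by_cases h : i + 1 < m - n
      · rw [Nat.mod_eq_of_lt h]
        exact (hwstep (n+1+i)).1
      · have hieq : i + 1 = m - n := by omega
        rw [hieq, Nat.mod_self]
        show Frac (w (n+1+0)).1 (w (n+1+i)).2
        have hni : n + 1 + i = m := by omega
        rw [hni, ← hw2]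
        exact (hwstep n).1
    exact sigma_of_cycle Frac (m-n) (by omega) (fun i => (w (n+1+i)).1)
      (fun i => (w (n+1+i)).2) hu hc hh1 hh2

end Sigma

section Round

variable {T B : Type*} [Fintype T] [Fintype B]

open scoped Classical in
/-- Rounding a nonnegative matrix with integer row and column sums to a natural-number
matrix with the same row and column sums and smaller support. -/
lemma round_exact (r : T → ℕ) (c : B → ℕ) (Q : T → B → Prop) :
    ∀ (F : ℕ) (y : T → B → ℝ),
      (Finset.univ.filter (fun p : T × B => ¬ IsIntR (y p.1 p.2))).card ≤ F →
      (∀ t b, 0 ≤ y t b) → (∀ t, ∑ b, y t b = r t) → (∀ b, ∑ t, y t b = c b) →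
      (∀ t b, 0 < y t b → Q t b) →
      ∃ y' : T → B → ℕ, (∀ t, ∑ b, y' t b = r t) ∧ (∀ b, ∑ t, y' t b = c b) ∧
        (∀ t b, 0 < y' t b → Q t b) := by
  have base : ∀ y : T → B → ℝ, (∀ t b, IsIntR (y t b)) →
      (∀ t b, 0 ≤ y t b) → (∀ t, ∑ b, y t b = r t) → (∀ b, ∑ t, y t b = c b) →
      (∀ t b, 0 < y t b → Q t b) →
      ∃ y' : T → B → ℕ, (∀ t, ∑ b, y' t b = r t) ∧ (∀ b, ∑ t, y' t b = c b) ∧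
        (∀ t b, 0 < y' t b → Q t b) := by
    intro y hint hpos hrow hcol hQ
    have hcast : ∀ t b, ((⌊y t b⌋₊ : ℕ) : ℝ) = y t b := by
      intro t b
      obtain ⟨n, hn⟩ := (hint t b).toNat (hpos t b)
      rw [hn, Nat.floor_natCast]
    refine ⟨fun t b => ⌊y t b⌋₊, ?_, ?_, ?_⟩
    · intro t
      have : ((∑ b, ⌊y t b⌋₊ : ℕ) : ℝ) = ((r t : ℕ) : ℝ) := by
        push_cast
        rw [Finset.sum_congr rfl (fun b _ => hcast t b), hrow t]
      exact_mod_cast this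
    · intro b
      have : ((∑ t, ⌊y t b⌋₊ : ℕ) : ℝ) = ((c b : ℕ) : ℝ) := by
        push_cast
        rw [Finset.sum_congr rfl (fun t _ => hcast t b), hcol b]
      exact_mod_cast this
    · intro t b hb
      apply hQ
      rw [← hcast t b]
      exact_mod_cast hb
  intro F
  induction F with
  | zero =>
    intro y hcard hpos hrow hcol hQ
    have hint : ∀ t b, IsIntR (y t b) := by
      intro t b
      by_contra hcon
      have : (t, b) ∈ Finset.univ.filter (fun p : T × B => ¬ IsIntR (y p.1 p.2)) :=
        Finset.mem_filter.2 ⟨Finset.mem_univ _, hcon⟩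
      have := Finset.card_pos.2 ⟨(t, b), this⟩
      omega
    exact base y hint hpos hrow hcol hQ
  | succ F ih =>
    intro y hcard hpos hrow hcol hQ
    by_cases hF : (Finset.univ.filter (fun p : T × B => ¬ IsIntR (y p.1 p.2))).card = 0
    · have hint : ∀ t b, IsIntR (y t b) := by
        intro t b
        by_contra hcon
        have : (t, b) ∈ Finset.univ.filter (fun p : T × B => ¬ IsIntR (y p.1 p.2)) :=
          Finset.mem_filter.2 ⟨Finset.mem_univ _, hcon⟩
        have := Finset.card_pos.2 ⟨(t, b), this⟩
        omega
      exact base y hint hpos hrow hcol hQ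
    · obtain ⟨p, hp⟩ := Finset.card_pos.1 (Nat.pos_of_ne_zero hF)
      have hpfrac : ¬ IsIntR (y p.1 p.2) := (Finset.mem_filter.1 hp).2
      have hrowF : ∀ t b, ¬ IsIntR (y t b) → ∃ b', b' ≠ b ∧ ¬ IsIntR (y t b') := by
        intro t b hfb
        by_contra hcon
        push_neg at hcon
        apply hfb
        have hyeq : y t b = (r t : ℝ) - ∑ b' ∈ Finset.univ.erase b, y t b' := by
          have := Finset.sum_erase_add Finset.univ (fun b' => y t b') (Finset.mem_univ b)
          rw [← hrow t, ← this]
          ring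
        rw [hyeq]
        exact (IsIntR.natCast (r t)).sub (IsIntR.sum _ _
          (fun b' hb' => hcon b' (Finset.ne_of_mem_erase hb')))
      have hcolF : ∀ t b, ¬ IsIntR (y t b) → ∃ t', t' ≠ t ∧ ¬ IsIntR (y t' b) := by
        intro t b hfb
        by_contra hcon
        push_neg at hcon
        apply hfb
        have hyeq : y t b = (c b : ℝ) - ∑ t' ∈ Finset.univ.erase t, y t' b := by
          have := Finset.sum_erase_add Finset.univ (fun t' => y t' b) (Finset.mem_univ t)
          rw [← hcol b, ← this]
          ring
        rw [hyeq]
        exact (IsIntR.natCast (c b)).sub (IsIntR.sum _ _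
          (fun t' ht' => hcon t' (Finset.ne_of_mem_erase ht')))
      obtain ⟨σ, hσ1, hσ2, hσ3, hσ4, hσ5⟩ := exists_sigma
        (fun t b => ¬ IsIntR (y t b)) p.1 p.2 hpfrac hrowF hcolF
      set P := Finset.univ.filter (fun q : T × B => σ q.1 q.2 = 1) with hPdef
      set M := Finset.univ.filter (fun q : T × B => σ q.1 q.2 = -1) with hMdef
      obtain ⟨t1, b1, hne1⟩ := hσ5
      have hPM : P.Nonempty ∧ M.Nonempty := by
        constructor
        · rcases hσ1 t1 b1 with h | h | h
          · exact absurd h hne1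
          · exact ⟨(t1, b1), Finset.mem_filter.2 ⟨Finset.mem_univ _, h⟩⟩
          · -- row sum is 0, has a -1 entry, so must have a positive entry
            by_contra hPempty
            have hle : ∀ b ∈ Finset.univ, σ t1 b ≤ (0:ℝ) := by
              intro b _
              rcases hσ1 t1 b with h' | h' | h'
              · rw [h']
              · exact absurd ⟨(t1, b), Finset.mem_filter.2 ⟨Finset.mem_univ _, h'⟩⟩ hPempty
              · rw [h']; norm_num
            have hlt : ∑ b, σ t1 b < 0 := by
              have := Finset.sum_lt_sum hle ⟨b1, Finset.mem_univ b1, by rw [h]; norm_num⟩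
              simpa using this
            rw [hσ2 t1] at hlt
            exact absurd hlt (by norm_num)
        · rcases hσ1 t1 b1 with h | h | h
          · exact absurd h hne1
          · by_contra hMempty
            have hle : ∀ b ∈ Finset.univ, (0:ℝ) ≤ σ t1 b := by
              intro b _
              rcases hσ1 t1 b with h' | h' | h'
              · rw [h']
              · rw [h']; norm_num
              · exact absurd ⟨(t1, b), Finset.mem_filter.2 ⟨Finset.mem_univ _, h'⟩⟩ hMempty
            have hlt : (0:ℝ) < ∑ b, σ t1 b := by
              have := Finset.sum_lt_sum hle ⟨b1, Finset.mem_univ b1, by rw [h]; norm_num⟩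
              simpa using this
            rw [hσ2 t1] at hlt
            exact absurd hlt (by norm_num)
          · exact ⟨(t1, b1), Finset.mem_filter.2 ⟨Finset.mem_univ _, h⟩⟩
      obtain ⟨hP, hM⟩ := hPM
      have hfracP : ∀ q ∈ P, ¬ IsIntR (y q.1 q.2) := by
        intro q hq
        exact hσ4 q.1 q.2 (by rw [(Finset.mem_filter.1 hq).2]; norm_num)
      have hfracM : ∀ q ∈ M, ¬ IsIntR (y q.1 q.2) := by
        intro q hq
        exact hσ4 q.1 q.2 (by rw [(Finset.mem_filter.1 hq).2]; norm_num)
      set f1 : T × B → ℝ := fun q => (⌊y q.1 q.2⌋₊ + 1 : ℝ) - y q.1 q.2 with hf1def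
      set f2 : T × B → ℝ := fun q => y q.1 q.2 - (⌊y q.1 q.2⌋₊ : ℝ) with hf2def
      set θ := min (P.inf' hP f1) (M.inf' hM f2) with hθdef
      have hθ1 : ∀ q ∈ P, θ ≤ f1 q := fun q hq =>
        le_trans (min_le_left _ _) (Finset.inf'_le f1 hq)
      have hθ2 : ∀ q ∈ M, θ ≤ f2 q := fun q hq =>
        le_trans (min_le_right _ _) (Finset.inf'_le f2 hq)
      have hθpos : 0 < θ := by
        rw [hθdef, lt_min_iff]
        constructor
        · rw [Finset.lt_inf'_iff]
          intro q hq
          have := (not_isIntR_pos (hpos q.1 q.2) (hfracP q hq)).2.1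
          simp only [hf1def]
          linarith
        · rw [Finset.lt_inf'_iff]
          intro q hq
          have := (not_isIntR_pos (hpos q.1 q.2) (hfracM q hq)).1
          simp only [hf2def]
          linarith
      set y2 : T → B → ℝ := fun t b => y t b + θ * σ t b with hy2def
      have hy2pos : ∀ t b, 0 ≤ y2 t b := by
        intro t b
        simp only [hy2def]
        rcases hσ1 t b with h | h | h <;> rw [h]
        · simp [hpos t b]
        · nlinarith [hpos t b]
        · have hmem : (t, b) ∈ M := Finset.mem_filter.2 ⟨Finset.mem_univ _, h⟩
          have h2 := hθ2 (t, b) hmem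
          simp only [hf2def] at h2
          have h3 : (0:ℝ) ≤ (⌊y t b⌋₊ : ℝ) := Nat.cast_nonneg _
          linarith
      have hy2row : ∀ t, ∑ b, y2 t b = r t := by
        intro t
        simp only [hy2def]
        rw [Finset.sum_add_distrib, ← Finset.mul_sum, hσ2 t, hrow t]
        ring
      have hy2col : ∀ b, ∑ t, y2 t b = c b := by
        intro b
        simp only [hy2def]
        rw [Finset.sum_add_distrib, ← Finset.mul_sum, hσ3 b, hcol b]
        ring
      have hy2Q : ∀ t b, 0 < y2 t b → Q t b := by
        intro t b hlt
        by_cases h : σ t b = 0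
        · simp only [hy2def, h, mul_zero, add_zero] at hlt
          exact hQ t b hlt
        · exact hQ t b (not_isIntR_pos (hpos t b) (hσ4 t b h)).2.2
      have hsub : (Finset.univ.filter (fun q : T × B => ¬ IsIntR (y2 q.1 q.2))) ⊆
          (Finset.univ.filter (fun q : T × B => ¬ IsIntR (y q.1 q.2))) := by
        intro q hq
        refine Finset.mem_filter.2 ⟨Finset.mem_univ _, ?_⟩
        by_cases h : σ q.1 q.2 = 0
        · have := (Finset.mem_filter.1 hq).2
          simp only [hy2def, h, mul_zero, add_zero] at this
          exact this
        · exact hσ4 q.1 q.2 h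
      -- find an entry that becomes integral
      have hnew : ∃ q0 : T × B, ¬ IsIntR (y q0.1 q0.2) ∧ IsIntR (y2 q0.1 q0.2) := by
        by_cases hmin : P.inf' hP f1 ≤ M.inf' hM f2
        · obtain ⟨q0, hq0P, hq0e⟩ := Finset.exists_mem_eq_inf' hP f1
          refine ⟨q0, hfracP q0 hq0P, ?_⟩
          have hσq : σ q0.1 q0.2 = 1 := (Finset.mem_filter.1 hq0P).2
          have hθe : θ = f1 q0 := by rw [hθdef, min_eq_left hmin, hq0e]
          have : y2 q0.1 q0.2 = (⌊y q0.1 q0.2⌋₊ + 1 : ℝ) := by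
            simp only [hy2def, hσq, mul_one, hθe, hf1def]
            ring
          rw [this]
          exact ⟨(⌊y q0.1 q0.2⌋₊ : ℤ) + 1, by push_cast; ring⟩
        · obtain ⟨q0, hq0M, hq0e⟩ := Finset.exists_mem_eq_inf' hM f2
          refine ⟨q0, hfracM q0 hq0M, ?_⟩
          have hσq : σ q0.1 q0.2 = -1 := (Finset.mem_filter.1 hq0M).2
          have hθe : θ = f2 q0 := by
            rw [hθdef, min_eq_right (le_of_lt (lt_of_not_ge hmin)), hq0e]
          have : y2 q0.1 q0.2 = (⌊y q0.1 q0.2⌋₊ : ℝ) := by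
            simp only [hy2def, hσq, hθe, hf2def]
            ring
          rw [this]
          exact ⟨(⌊y q0.1 q0.2⌋₊ : ℤ), by push_cast; ring⟩
      obtain ⟨q0, hq0f, hq0i⟩ := hnew
      have hssub : (Finset.univ.filter (fun q : T × B => ¬ IsIntR (y2 q.1 q.2))) ⊂
          (Finset.univ.filter (fun q : T × B => ¬ IsIntR (y q.1 q.2))) := by
        refine ⟨hsub, fun hcon => ?_⟩
        have h1 : q0 ∈ Finset.univ.filter (fun q : T × B => ¬ IsIntR (y q.1 q.2)) :=
          Finset.mem_filter.2 ⟨Finset.mem_univ _, hq0f⟩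
        have h2 := Finset.mem_filter.1 (hcon h1)
        exact h2.2 hq0i
      have hcard2 : (Finset.univ.filter (fun q : T × B => ¬ IsIntR (y2 q.1 q.2))).card ≤ F := by
        have := Finset.card_lt_card hssub
        omega
      exact ih y2 hcard2 hy2pos hy2row hy2col hy2Q

/-- Transportation rounding with capacity upper bounds. -/
lemma round_cap (y : T → B → ℝ) (hy : ∀ t b, 0 ≤ y t b) (r : T → ℕ)
    (hrow : ∀ t, ∑ b, y t b = r t) (cap : B → ℕ) (hcap : ∀ b, ∑ t, y t b ≤ cap b) :
    ∃ y' : T → B → ℕ, (∀ t, ∑ b, y' t b = r t) ∧ (∀ b, ∑ t, y' t b ≤ cap b) ∧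
      (∀ t b, 0 < y' t b → 0 < y t b) := by
  classical
  have hsums : ∑ t, r t ≤ ∑ b, cap b := by
    have h1 : ((∑ t, r t : ℕ) : ℝ) ≤ ((∑ b, cap b : ℕ) : ℝ) := by
      push_cast
      calc ∑ t, (r t : ℝ) = ∑ t, ∑ b, y t b := by
            refine Finset.sum_congr rfl fun t _ => (hrow t).symm
        _ = ∑ b, ∑ t, y t b := Finset.sum_comm
        _ ≤ ∑ b, (cap b : ℝ) := Finset.sum_le_sum fun b _ => hcap b
    exact_mod_cast h1
  set ytil : Option T → B → ℝ := fun t? b =>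
    t?.elim ((cap b : ℝ) - ∑ t, y t b) (fun t => y t b) with hytil
  set r' : Option T → ℕ := fun t? => t?.elim (∑ b, cap b - ∑ t, r t) r with hr'
  set Q : Option T → B → Prop := fun t? b => t?.elim True (fun t => 0 < y t b) with hQ
  have hpos' : ∀ t? b, 0 ≤ ytil t? b := by
    rintro (_ | t) b
    · simp only [hytil, Option.elim]
      linarith [hcap b]
    · exact hy t b
  have hrow' : ∀ t?, ∑ b, ytil t? b = r' t? := by
    rintro (_ | t)
    · simp only [hytil, hr', Option.elim]
      rw [Finset.sum_sub_distrib]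
      rw [Nat.cast_sub hsums]
      push_cast
      congr 1
      rw [Finset.sum_comm]
      refine (Finset.sum_congr rfl fun t _ => hrow t).symm ▸ rfl
    · exact hrow t
  have hcol' : ∀ b, ∑ t?, ytil t? b = cap b := by
    intro b
    rw [Fintype.sum_option]
    simp only [hytil, Option.elim]
    ring
  have hQ' : ∀ t? b, 0 < ytil t? b → Q t? b := by
    rintro (_ | t) b h
    · trivial
    · exact h
  obtain ⟨y'', h1, h2, h3⟩ := round_exact r' cap Q
    (Finset.univ.filter (fun p : Option T × B => ¬ IsIntR (ytil p.1 p.2))).card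
    ytil le_rfl hpos' hrow' hcol' hQ'
  refine ⟨fun t b => y'' (some t) b, fun t => h1 (some t), ?_, fun t b h => h3 (some t) b h⟩
  intro b
  have := h2 b
  rw [Fintype.sum_option] at this
  show ∑ t, y'' (some t) b ≤ cap b
  omega

end Round

end NicePackingAux

/-- Every feasible fractional packing (cardinality constraint `k`, maximum bin load `G`)
of an instance in which every large item (size at least `ε`) has size an integer multiple
of `ε²` that is at most `1/ε²` can be converted into a nice packing: a fractional packing
with cardinality constraint `k` and maximum bin load at most `G + ε²` in which the amount
of every large item placed in every bin is an integer multiple of `ε²`. -/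
theorem nice_packing {T B : Type*} [Fintype T] [Fintype B] (ε : ℝ)
    (hε : 0 < ε) (hε10 : ε ≤ 1 / 10) (hεint : ∃ n : ℤ, (1 : ℝ) / ε = n)
    (S : T → ℝ) (hS : ∀ t, 0 ≤ S t)
    (hlarge : ∀ t, ε ≤ S t → (∃ n : ℕ, S t = (n : ℝ) * ε ^ 2) ∧ S t ≤ 1 / ε ^ 2)
    (k : ℕ) (G : ℝ)
    (h : ∃ x : T → B → ℝ,
      (∀ t b, 0 ≤ x t b) ∧
      (∀ t, ∑ b, x t b = S t) ∧
      (∀ b, {t | 0 < x t b}.ncard ≤ k) ∧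
      (∀ b, ∑ t, x t b ≤ G)) :
    ∃ x' : T → B → ℝ,
      (∀ t b, 0 ≤ x' t b) ∧
      (∀ t, ∑ b, x' t b = S t) ∧
      (∀ b, {t | 0 < x' t b}.ncard ≤ k) ∧
      (∀ b, ∑ t, x' t b ≤ G + ε ^ 2) ∧
      (∀ t b, ε ≤ S t → ∃ n : ℕ, x' t b = (n : ℝ) * ε ^ 2) := by
  classical
  obtain ⟨x, hx0, hx1, hx2, hx3⟩ := h
  have hε2 : (0:ℝ) < ε ^ 2 := by positivity
  have hn : ∀ t : {t : T // ε ≤ S t}, ∃ n : ℕ, S t.1 = (n : ℝ) * ε ^ 2 :=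
    fun t => (hlarge t.1 t.2).1
  choose nn hnn using hn
  set y : {t : T // ε ≤ S t} → B → ℝ := fun t b => x t.1 b / ε ^ 2 with hy
  set cap : B → ℕ := fun b => ⌈(∑ t : {t : T // ε ≤ S t}, x t.1 b) / ε ^ 2⌉₊ with hcap
  have hypos : ∀ t b, 0 ≤ y t b := fun t b => div_nonneg (hx0 t.1 b) (le_of_lt hε2)
  have hyrow : ∀ t : {t : T // ε ≤ S t}, ∑ b, y t b = nn t := by
    intro t
    simp only [hy]
    rw [← Finset.sum_div, hx1 t.1, hnn t]
    field_simp
  have hycap : ∀ b, ∑ t : {t : T // ε ≤ S t}, y t b ≤ cap b := by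
    intro b
    have e : ∑ t : {t : T // ε ≤ S t}, y t b
        = (∑ t : {t : T // ε ≤ S t}, x t.1 b) / ε ^ 2 := by
      simp only [hy]
      rw [Finset.sum_div]
    rw [e, hcap]
    exact Nat.le_ceil _
  obtain ⟨y', hy'row, hy'cap, hy'supp⟩ := round_cap y hypos nn hyrow cap hycap
  set x' : T → B → ℝ := fun t b =>
    if h : ε ≤ S t then (y' ⟨t, h⟩ b : ℝ) * ε ^ 2 else x t b with hx'def
  have hx'large : ∀ (t : {t : T // ε ≤ S t}) b, x' t.1 b = (y' t b : ℝ) * ε ^ 2 := by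
    intro t b
    simp only [hx'def]
    rw [dif_pos t.2]
  have hx'small : ∀ t b, ¬ (ε ≤ S t) → x' t b = x t b := by
    intro t b ht
    simp only [hx'def]
    rw [dif_neg ht]
  refine ⟨x', ?_, ?_, ?_, ?_, ?_⟩
  · intro t b
    by_cases ht : ε ≤ S t
    · rw [hx'large ⟨t, ht⟩ b]
      positivity
    · rw [hx'small t b ht]
      exact hx0 t b
  · intro t
    by_cases ht : ε ≤ S t
    · have : ∑ b, x' t b = ∑ b, (y' ⟨t, ht⟩ b : ℝ) * ε ^ 2 :=
        Finset.sum_congr rfl fun b _ => hx'large ⟨t, ht⟩ b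
      rw [this, ← Finset.sum_mul, ← Nat.cast_sum, hy'row ⟨t, ht⟩, ← hnn ⟨t, ht⟩]
    · have : ∑ b, x' t b = ∑ b, x t b :=
        Finset.sum_congr rfl fun b _ => hx'small t b ht
      rw [this, hx1 t]
  · intro b
    refine le_trans (Set.ncard_le_ncard ?_ (Set.toFinite _)) (hx2 b)
    intro t ht
    simp only [Set.mem_setOf_eq] at ht ⊢
    by_cases h : ε ≤ S t
    · rw [hx'large ⟨t, h⟩ b] at ht
      have h1 : 0 < (y' ⟨t, h⟩ b : ℝ) := by
        by_contra hcon
        push_neg at hcon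
        have : (y' ⟨t, h⟩ b : ℝ) = 0 := le_antisymm hcon (Nat.cast_nonneg _)
        rw [this] at ht
        simp at ht
      have h2 : 0 < y' ⟨t, h⟩ b := by exact_mod_cast h1
      have h3 : 0 < x t b / ε ^ 2 := hy'supp ⟨t, h⟩ b h2
      have h4 : 0 < x t b / ε ^ 2 * ε ^ 2 := mul_pos h3 hε2
      rwa [div_mul_cancel₀ _ (ne_of_gt hε2)] at h4
    · rw [hx'small t b h] at ht
      exact ht
  · intro b
    have hL : (0:ℝ) ≤ ∑ t : {t : T // ε ≤ S t}, x t.1 b :=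
      Finset.sum_nonneg fun t _ => hx0 t.1 b
    have hceil : (cap b : ℝ) < (∑ t : {t : T // ε ≤ S t}, x t.1 b) / ε ^ 2 + 1 := by
      rw [hcap]
      exact Nat.ceil_lt_add_one (by positivity)
    have hy'le : ((∑ t : {t : T // ε ≤ S t}, y' t b : ℕ) : ℝ) ≤ cap b := by
      exact_mod_cast hy'cap b
    have hdiff : ∑ t, (x' t b - x t b)
        = (↑(∑ t : {t : T // ε ≤ S t}, y' t b)) * ε ^ 2
          - ∑ t : {t : T // ε ≤ S t}, x t.1 b := by
      have e1 : ∑ t, (x' t b - x t b)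
          = ∑ t ∈ Finset.univ.filter (fun t => ε ≤ S t), (x' t b - x t b) := by
        rw [← Finset.sum_filter_add_sum_filter_not Finset.univ (fun t => ε ≤ S t)
          (fun t => x' t b - x t b)]
        rw [show ∑ t ∈ Finset.univ.filter (fun t => ¬ ε ≤ S t), (x' t b - x t b) = 0 from
          Finset.sum_eq_zero (fun t ht => by
            rw [hx'small t b (Finset.mem_filter.1 ht).2, sub_self]), add_zero]
      have e2 : ∑ t ∈ Finset.univ.filter (fun t => ε ≤ S t), (x' t b - x t b)
          = ∑ t : {t : T // ε ≤ S t}, (x' t.1 b - x t.1 b) :=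
        Finset.sum_subtype _ (fun t => by simp) _
      rw [e1, e2]
      rw [Finset.sum_sub_distrib]
      congr 1
      rw [Finset.sum_congr rfl fun t _ => hx'large t b, ← Finset.sum_mul, ← Nat.cast_sum]
    have hsum : ∑ t, x' t b = ∑ t, x t b
        + ((↑(∑ t : {t : T // ε ≤ S t}, y' t b)) * ε ^ 2
          - ∑ t : {t : T // ε ≤ S t}, x t.1 b) := by
      rw [← hdiff, Finset.sum_sub_distrib]
      ring
    rw [hsum]
    have hbound : (↑(∑ t : {t : T // ε ≤ S t}, y' t b)) * ε ^ 2
        - ∑ t : {t : T // ε ≤ S t}, x t.1 b ≤ ε ^ 2 := by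
      have h2 : (cap b : ℝ) * ε ^ 2
          < ((∑ t : {t : T // ε ≤ S t}, x t.1 b) / ε ^ 2 + 1) * ε ^ 2 := by
        nlinarith
      have h3 : ((∑ t : {t : T // ε ≤ S t}, x t.1 b) / ε ^ 2 + 1) * ε ^ 2
          = ∑ t : {t : T // ε ≤ S t}, x t.1 b + ε ^ 2 := by
        field_simp
      nlinarith
    linarith [hx3 b]
  · intro t b ht
    rw [hx'large ⟨t, ht⟩ b]
    exact ⟨y' ⟨t, ht⟩ b, rfl⟩
end
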